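/- arXiv:1612.06678 — 6 statements merged into one kernel-verified Lean document; each statement's English description precedes it below -/
import Mathlib

section
/- Let U ⊆ ℝ² be open and F : U → ℂ be twice continuously differentiable. Then the pair of real functions (K, κ) defined by K = |α|·Re(α), κ = |α|·Im(α) with α = e^F satisfies the system (K² + κ²)^{1/4}·Δ((1/4)·ln(K²+κ²)) = 2K and (K²+κ²)^{1/4}·Δ(arctan(κ/K)) = 2κ on the set where Re(α) ≠ 0, provided ΔF = 2e^F. -/
open Complex

noncomputable def pdu {E : Type*} [NormedAddCommGroup E] [NormedSpace ℝ E]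
    (f : ℝ × ℝ → E) (p : ℝ × ℝ) : E := fderiv ℝ f p (1, 0)

noncomputable def pdv {E : Type*} [NormedAddCommGroup E] [NormedSpace ℝ E]
    (f : ℝ × ℝ → E) (p : ℝ × ℝ) : E := fderiv ℝ f p (0, 1)

noncomputable def lap {E : Type*} [NormedAddCommGroup E] [NormedSpace ℝ E]
    (f : ℝ × ℝ → E) (p : ℝ × ℝ) : E := pdu (pdu f) p + pdv (pdv f) p

/-! Since `‖α‖ = e^{Re F}`, one has `K² + κ² = e^{4 Re F}` and `κ / K = tan (Im F)`. Hence
`(1/4) ln (K² + κ²) = Re F`, and near a point where `cos (Im F) ≠ 0` the function `arctan (κ / K)`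
differs from `Im F` by a constant multiple of `π`. The two equations are therefore the real and
imaginary parts of `ΔF = 2 e^F`, multiplied by `(K² + κ²)^{1/4} = e^{Re F}`. -/

open Filter Topology Real

section Laplacian

variable {E G H : Type*} [NormedAddCommGroup E] [NormedSpace ℝ E]
  [NormedAddCommGroup G] [NormedSpace ℝ G] [NormedAddCommGroup H] [NormedSpace ℝ H]

lemma ContinuousLinearMap.fderiv_comp_apply (L : G →L[ℝ] H) {g : E → G} {q : E}
    (hg : DifferentiableAt ℝ g q) (v : E) :
    fderiv ℝ (fun x => L (g x)) q v = L (fderiv ℝ g q v) :=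
  DFunLike.congr_fun (L.hasFDerivAt.comp q hg.hasFDerivAt).fderiv v

lemma ContinuousLinearMap.fderiv_fderiv_comp_apply (L : G →L[ℝ] H) {g : E → G} {p : E}
    (hg : ContDiffAt ℝ 2 g p) (v w : E) :
    fderiv ℝ (fun q => fderiv ℝ (fun x => L (g x)) q v) p w
      = L (fderiv ℝ (fun q => fderiv ℝ g q v) p w) := by
  have hfirst : (fun q => fderiv ℝ (fun x => L (g x)) q v) =ᶠ[𝓝 p]
      fun q => L (fderiv ℝ g q v) :=
    (hg.eventually (by simp)).mono fun q hq =>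
      L.fderiv_comp_apply (hq.differentiableAt two_ne_zero) v
  have hdiff : DifferentiableAt ℝ (fun q => fderiv ℝ g q v) p :=
    ((hg.fderiv_right (m := 1) le_rfl).differentiableAt one_ne_zero).clm_apply
      (differentiableAt_const v)
  rw [hfirst.fderiv_eq, L.fderiv_comp_apply hdiff]

lemma ContinuousLinearMap.lap_comp (L : G →L[ℝ] H) {g : ℝ × ℝ → G} {p : ℝ × ℝ}
    (hg : ContDiffAt ℝ 2 g p) :
    lap (fun q => L (g q)) p = L (lap g p) := by
  unfold lap pdu pdv
  rw [map_add, L.fderiv_fderiv_comp_apply hg, L.fderiv_fderiv_comp_apply hg]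

lemma lap_congr {f g : ℝ × ℝ → G} {p : ℝ × ℝ} (h : f =ᶠ[𝓝 p] g) : lap f p = lap g p := by
  have hdir : ∀ v, (fun q => fderiv ℝ f q v) =ᶠ[𝓝 p] fun q => fderiv ℝ g q v :=
    fun v => (h.fderiv (𝕜 := ℝ)).mono fun q hq => DFunLike.congr_fun hq v
  unfold lap pdu pdv
  rw [(hdir _).fderiv_eq, (hdir _).fderiv_eq]

lemma lap_sub_const (f : ℝ × ℝ → G) (c : G) (p : ℝ × ℝ) :
    lap (fun q => f q - c) p = lap f p := by
  unfold lap pdu pdv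
  simp only [fderiv_sub_const]

end Laplacian

lemma Complex.sq_norm_mul_re_add_sq_norm_mul_im (w : ℂ) :
    (‖w‖ * w.re) ^ 2 + (‖w‖ * w.im) ^ 2 = ‖w‖ ^ 4 := by
  have h := Complex.sq_norm w
  rw [normSq_apply] at h
  linear_combination (-‖w‖ ^ 2) * h

lemma Complex.norm_mul_im_div_norm_mul_re_exp (z : ℂ) :
    ‖exp z‖ * (exp z).im / (‖exp z‖ * (exp z).re) = Real.tan z.im := by
  rw [mul_div_mul_left _ _ (norm_ne_zero_iff.2 (exp_ne_zero z)), exp_re, exp_im,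
    mul_div_mul_left _ _ (Real.exp_pos _).ne', Real.tan_eq_sin_div_cos]

lemma Real.exists_int_sub_mul_pi_mem_Ioo {y : ℝ} (hy : cos y ≠ 0) :
    ∃ n : ℤ, y - n * π ∈ Set.Ioo (-(π / 2)) (π / 2) := by
  set n := round (y / π)
  have hle : |y - n * π| ≤ π / 2 := by
    calc |y - n * π| = |y / π - n| * π := by
          rw [← abs_of_pos pi_pos, ← abs_mul, abs_of_pos pi_pos, sub_mul,
            div_mul_cancel₀ _ pi_ne_zero]
      _ ≤ 1 / 2 * π := mul_le_mul_of_nonneg_right (abs_sub_round _) pi_pos.le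
      _ = π / 2 := by ring
  have hodd : ∀ k : ℤ, y ≠ (2 * k + 1) * π / 2 := fun k hk => hy (cos_eq_zero_iff.2 ⟨k, hk⟩)
  refine ⟨n, lt_of_le_of_ne (abs_le.1 hle).1 fun h => hodd (n - 1) ?_,
    lt_of_le_of_ne (abs_le.1 hle).2 fun h => hodd n ?_⟩ <;> push_cast <;> linarith

lemma Real.exists_eventually_arctan_tan_eq {y : ℝ} (hy : cos y ≠ 0) :
    ∃ n : ℤ, ∀ᶠ t in 𝓝 y, arctan (tan t) = t - n * π := by
  obtain ⟨n, hn⟩ := exists_int_sub_mul_pi_mem_Ioo hy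
  refine ⟨n, ?_⟩
  filter_upwards [(continuous_sub_right _).continuousAt.preimage_mem_nhds (isOpen_Ioo.mem_nhds hn)]
    with t ht
  rw [← tan_periodic.sub_int_mul_eq n, arctan_tan ht.1 ht.2]

theorem stmt1 (U : Set (ℝ × ℝ)) (hU : IsOpen U) (F : ℝ × ℝ → ℂ)
    (hF : ContDiffOn ℝ 2 F U)
    (heq : ∀ p ∈ U, lap F p = 2 * Complex.exp (F p))
    (α : ℝ × ℝ → ℂ) (hα : ∀ p, α p = Complex.exp (F p))
    (K κ : ℝ × ℝ → ℝ)
    (hK : ∀ p, K p = ‖α p‖ * (α p).re)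
    (hκ : ∀ p, κ p = ‖α p‖ * (α p).im) :
    ∀ p ∈ U, (α p).re ≠ 0 →
      (K p ^ 2 + κ p ^ 2) ^ ((1 : ℝ) / 4) *
          lap (fun q => (1 / 4) * Real.log (K q ^ 2 + κ q ^ 2)) p = 2 * K p ∧
      (K p ^ 2 + κ p ^ 2) ^ ((1 : ℝ) / 4) *
          lap (fun q => Real.arctan (κ q / K q)) p = 2 * κ p := by
  intro p hp hre
  simp only [hα] at hK hκ hre
  have hF2 : ContDiffAt ℝ 2 F p := hF.contDiffAt (hU.mem_nhds hp)
  have hsum : ∀ q, K q ^ 2 + κ q ^ 2 = ‖exp (F q)‖ ^ 4 := fun q => by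
    rw [hK, hκ, sq_norm_mul_re_add_sq_norm_mul_im]
  have hcoef : (K p ^ 2 + κ p ^ 2) ^ ((1 : ℝ) / 4) = Real.exp (F p).re := by
    rw [hsum, ← norm_exp, ← Real.rpow_natCast, ← Real.rpow_mul (norm_nonneg _)]
    norm_num
  have hlog : (fun q => 1 / 4 * Real.log (K q ^ 2 + κ q ^ 2)) = fun q => reCLM (F q) :=
    funext fun q => by rw [hsum, Real.log_pow, norm_exp, Real.log_exp, reCLM_apply]; ring
  have hcos : Real.cos (F p).im ≠ 0 := by
    rw [exp_re] at hre
    exact right_ne_zero_of_mul hre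
  obtain ⟨n, hn⟩ := exists_eventually_arctan_tan_eq hcos
  have harctan : (fun q => Real.arctan (κ q / K q)) =ᶠ[𝓝 p] fun q => imCLM (F q) - n * π :=
    ((continuous_im.continuousAt.comp hF2.continuousAt).eventually hn).mono fun q hq => by
      simpa only [hK, hκ, norm_mul_im_div_norm_mul_re_exp, imCLM_apply, Function.comp_apply]
        using hq
  rw [hlog, lap_congr harctan, lap_sub_const, reCLM.lap_comp hF2, imCLM.lap_comp hF2, heq p hp,
    hcoef, hK, hκ, norm_exp]
  simp only [reCLM_apply, imCLM_apply, mul_re, mul_im, re_ofNat, im_ofNat, exp_re, exp_im]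
  constructor <;> ring
end

section
/- Let η : ℂ → ℂ be a complex harmonic function on an open set U (i.e. Δη = 0), with η ≠ 0 and (η_u)² + (η_v)² ≠ 0 on U. Then the function α = ((η_u)² + (η_v)²)/η² satisfies Δ(log α) = 2α, for any smooth local branch log α of the logarithm of α. -/
open Complex

section helpers

variable {f g : ℝ × ℝ → ℂ} {p : ℝ × ℝ} {w : ℝ × ℝ}

lemma pdu_def {E : Type*} [NormedAddCommGroup E] [NormedSpace ℝ E] (f : ℝ × ℝ → E) :
    pdu f = fun p => fderiv ℝ f p (1, 0) := rfl

lemma pdv_def {E : Type*} [NormedAddCommGroup E] [NormedSpace ℝ E] (f : ℝ × ℝ → E) :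
    pdv f = fun p => fderiv ℝ f p (0, 1) := rfl

lemma fd_mul (hf : DifferentiableAt ℝ f p) (hg : DifferentiableAt ℝ g p) :
    fderiv ℝ (fun q => f q * g q) p w
      = f p * fderiv ℝ g p w + g p * fderiv ℝ f p w := by
  rw [fderiv_fun_mul hf hg]
  simp [smul_eq_mul]

lemma fd_add (hf : DifferentiableAt ℝ f p) (hg : DifferentiableAt ℝ g p) :
    fderiv ℝ (fun q => f q + g q) p w = fderiv ℝ f p w + fderiv ℝ g p w := by
  rw [fderiv_fun_add hf hg]; rfl

lemma fd_const_mul (hg : DifferentiableAt ℝ g p) (c : ℂ) :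
    fderiv ℝ (fun q => c * g q) p w = c * fderiv ℝ g p w := by
  rw [fderiv_const_mul hg c]; simp

lemma fd_congr {U : Set (ℝ × ℝ)} (hU : IsOpen U) (hp : p ∈ U)
    (h : ∀ q ∈ U, f q = g q) : fderiv ℝ f p = fderiv ℝ g p :=
  Filter.EventuallyEq.fderiv_eq (Filter.eventuallyEq_of_mem (hU.mem_nhds hp) h)

lemma fd_exp (hf : DifferentiableAt ℝ f p) :
    fderiv ℝ (fun q => Complex.exp (f q)) p w
      = Complex.exp (f p) * fderiv ℝ f p w := by
  rw [(hf.hasFDerivAt.cexp).fderiv]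
  simp [smul_eq_mul]

lemma fd_snd (hf : DifferentiableAt ℝ (fderiv ℝ f) p) (v : ℝ × ℝ) :
    fderiv ℝ (fun q => fderiv ℝ f q v) p w = fderiv ℝ (fderiv ℝ f) p w v := by
  rw [fderiv_clm_apply hf (differentiableAt_const v)]
  simp

lemma fd_swap (hf : DifferentiableAt ℝ (fderiv ℝ f) p)
    (hs : IsSymmSndFDerivAt ℝ f p) : pdu (pdv f) p = pdv (pdu f) p := by
  show fderiv ℝ (fun q => fderiv ℝ f q (0,1)) p (1,0)
      = fderiv ℝ (fun q => fderiv ℝ f q (1,0)) p (0,1)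
  rw [fd_snd hf, fd_snd hf]
  exact hs _ _

end helpers

lemma holo_crit {W : Set ℂ} (G : ℝ × ℝ → ℂ) (T : ℂ →L[ℝ] ℝ × ℝ)
    (hdiff : ∀ z ∈ W, DifferentiableAt ℝ G (T z))
    (hCR : ∀ z ∈ W, fderiv ℝ G (T z) (T I) = I * fderiv ℝ G (T z) (T 1)) :
    DifferentiableOn ℂ (fun z => G (T z)) W := by
  intro z hz
  have h1 : HasFDerivAt (fun z => G (T z)) ((fderiv ℝ G (T z)).comp T) z :=
    ((hdiff z hz).hasFDerivAt).comp z T.hasFDerivAt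
  set c := fderiv ℝ G (T z) (T 1) with hc
  have hres : (((c • ContinuousLinearMap.id ℂ ℂ) : ℂ →L[ℂ] ℂ).restrictScalars ℝ)
      = (fderiv ℝ G (T z)).comp T := by
    ext w
    have hw : w = w.re • (1 : ℂ) + w.im • I := by
      simp [Complex.real_smul, Complex.re_add_im]
    have hTw : T w = w.re • T 1 + w.im • T I := by
      conv_lhs => rw [hw]
      simp only [map_add, map_smul]
    have hl : (((c • ContinuousLinearMap.id ℂ ℂ) : ℂ →L[ℂ] ℂ).restrictScalars ℝ) w
        = c * w := rfl
    rw [hl]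
    show c * w = fderiv ℝ G (T z) (T w)
    rw [hTw, map_add, map_smul, map_smul, hCR z hz]
    rw [Complex.real_smul, Complex.real_smul]
    have h2 : (w.re : ℂ) + (w.im : ℂ) * I = w := Complex.re_add_im w
    linear_combination (-c) * h2
  exact ((hasFDerivAt_of_restrictScalars (𝕜 := ℝ) h1 hres).differentiableAt).differentiableWithinAt

lemma smooth_pd {U : Set (ℝ × ℝ)} (hU : IsOpen U) {η : ℝ × ℝ → ℂ}
    (hη : ContDiffOn ℝ 2 η U) (hharm : ∀ p ∈ U, lap η p = 0) :
    ContDiffOn ℝ 2 (pdu η) U ∧ ContDiffOn ℝ 2 (pdv η) U := by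
  have hd2 : ContDiffOn ℝ 1 (fderiv ℝ η) U := hη.fderiv_of_isOpen hU (by norm_num)
  have hdiffd : ∀ q ∈ U, DifferentiableAt ℝ (fderiv ℝ η) q := fun q hq =>
    ((hd2.differentiableOn one_ne_zero) q hq).differentiableAt (hU.mem_nhds hq)
  have hdP : ∀ q ∈ U, DifferentiableAt ℝ (pdu η) q := fun q hq =>
    (hdiffd q hq).clm_apply (differentiableAt_const _)
  have hdQ : ∀ q ∈ U, DifferentiableAt ℝ (pdv η) q := fun q hq =>
    (hdiffd q hq).clm_apply (differentiableAt_const _)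
  have hsym : ∀ q ∈ U, ∀ v w, fderiv ℝ (fderiv ℝ η) q v w = fderiv ℝ (fderiv ℝ η) q w v :=
    fun q hq => (hη.contDiffAt (hU.mem_nhds hq)).isSymmSndFDerivAt (by simp [minSmoothness_of_isRCLikeNormedField])
  have hharm' : ∀ q ∈ U,
      fderiv ℝ (fderiv ℝ η) q (1,0) (1,0) + fderiv ℝ (fderiv ℝ η) q (0,1) (0,1) = 0 := by
    intro q hq
    have h0 := hharm q hq
    show fderiv ℝ (fderiv ℝ η) q ((1:ℝ),(0:ℝ)) (1,0) + fderiv ℝ (fderiv ℝ η) q ((0:ℝ),(1:ℝ)) (0,1) = 0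
    rw [← fd_snd (hdiffd q hq) ((1:ℝ),(0:ℝ)), ← fd_snd (hdiffd q hq) ((0:ℝ),(1:ℝ))]
    exact h0
  have key : ∀ q ∈ U, ∀ (ε : ℂ) (w : ℝ × ℝ),
      fderiv ℝ (fun r => pdu η r + ε * pdv η r) q w
        = fderiv ℝ (fderiv ℝ η) q w (1,0) + ε * fderiv ℝ (fderiv ℝ η) q w (0,1) := by
    intro q hq ε w
    rw [fd_add (hdP q hq) ((hdQ q hq).const_mul ε), fd_const_mul (hdQ q hq)]
    show fderiv ℝ (fun r => fderiv ℝ η r (1,0)) q w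
        + ε * fderiv ℝ (fun r => fderiv ℝ η r (0,1)) q w = _
    rw [fd_snd (hdiffd q hq) ((1:ℝ),(0:ℝ)), fd_snd (hdiffd q hq) ((0:ℝ),(1:ℝ))]
  -- the two linear maps
  set T₁ : ℂ →L[ℝ] ℝ × ℝ := (Complex.equivRealProdCLM : ℂ ≃L[ℝ] ℝ × ℝ).toContinuousLinearMap with hT₁
  set T₂ : ℂ →L[ℝ] ℝ × ℝ :=
    T₁.comp (Complex.conjCLE : ℂ ≃L[ℝ] ℂ).toContinuousLinearMap with hT₂
  have hT₁app : ∀ z : ℂ, T₁ z = (z.re, z.im) := fun z => rfl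
  have hT₂app : ∀ z : ℂ, T₂ z = (z.re, -z.im) := fun z => rfl
  have hT₁1 : T₁ 1 = ((1:ℝ), (0:ℝ)) := by rw [hT₁app]; norm_num
  have hT₁I : T₁ I = ((0:ℝ), (1:ℝ)) := by rw [hT₁app]; norm_num
  have hT₂1 : T₂ 1 = ((1:ℝ), (0:ℝ)) := by rw [hT₂app]; norm_num
  have hT₂I : T₂ I = ((0:ℝ), (-1:ℝ)) := by rw [hT₂app]; norm_num
  set G₁ : ℝ × ℝ → ℂ := fun r => pdu η r + (-I) * pdv η r with hG₁
  set G₂ : ℝ × ℝ → ℂ := fun r => pdu η r + I * pdv η r with hG₂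
  have hdG₁ : ∀ q ∈ U, DifferentiableAt ℝ G₁ q := fun q hq =>
    (hdP q hq).add ((hdQ q hq).const_mul _)
  have hdG₂ : ∀ q ∈ U, DifferentiableAt ℝ G₂ q := fun q hq =>
    (hdP q hq).add ((hdQ q hq).const_mul _)
  have hF₁ : DifferentiableOn ℂ (fun z => G₁ (T₁ z)) (T₁ ⁻¹' U) := by
    apply holo_crit G₁ T₁ (fun z hz => hdG₁ _ hz)
    intro z hz
    rw [hG₁, key _ hz _ (T₁ I), key _ hz _ (T₁ 1), hT₁1, hT₁I]
    have hs := hsym _ hz ((0:ℝ),(1:ℝ)) ((1:ℝ),(0:ℝ))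
    have hh := hharm' _ hz
    linear_combination hs - I * hh + ((fderiv ℝ (fderiv ℝ η) (T₁ z)) (1, 0)) ((0:ℝ), (1:ℝ)) * Complex.I_sq
  have hF₂ : DifferentiableOn ℂ (fun z => G₂ (T₂ z)) (T₂ ⁻¹' U) := by
    apply holo_crit G₂ T₂ (fun z hz => hdG₂ _ hz)
    intro z hz
    rw [hG₂, key _ hz _ (T₂ I), key _ hz _ (T₂ 1), hT₂1, hT₂I]
    have hs := hsym _ hz ((0:ℝ),(1:ℝ)) ((1:ℝ),(0:ℝ))
    have hh := hharm' _ hz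
    have hneg : fderiv ℝ (fderiv ℝ η) (T₂ z) ((0:ℝ),(-1:ℝ))
        = - fderiv ℝ (fderiv ℝ η) (T₂ z) ((0:ℝ),(1:ℝ)) := by
      rw [show ((0:ℝ),(-1:ℝ)) = -((0:ℝ),(1:ℝ)) by norm_num, map_neg]
    rw [hneg]
    simp only [ContinuousLinearMap.neg_apply]
    linear_combination -hs - I * hh - ((fderiv ℝ (fderiv ℝ η) (T₂ z)) (1, 0)) ((0:ℝ), (1:ℝ)) * Complex.I_sq
  have hopen₁ : IsOpen (T₁ ⁻¹' U) := hU.preimage T₁.continuous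
  have hopen₂ : IsOpen (T₂ ⁻¹' U) := hU.preimage T₂.continuous
  have hc₁ : ContDiffOn ℝ 2 (fun z => G₁ (T₁ z)) (T₁ ⁻¹' U) :=
    (hF₁.contDiffOn hopen₁).restrict_scalars ℝ
  have hc₂ : ContDiffOn ℝ 2 (fun z => G₂ (T₂ z)) (T₂ ⁻¹' U) :=
    (hF₂.contDiffOn hopen₂).restrict_scalars ℝ
  set σ : ℝ × ℝ → ℂ := fun q => Complex.equivRealProdCLM.symm q with hσdef
  have hσ : ContDiff ℝ 2 σ :=
    (Complex.equivRealProdCLM.symm : (ℝ × ℝ) ≃L[ℝ] ℂ).toContinuousLinearMap.contDiff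
  have hσ₁ : ∀ q, T₁ (σ q) = q := fun q => Complex.equivRealProdCLM.apply_symm_apply q
  have hκ : ContDiff ℝ 2 (fun q => (Complex.conjCLE : ℂ ≃L[ℝ] ℂ) (σ q)) :=
    ((Complex.conjCLE : ℂ ≃L[ℝ] ℂ).toContinuousLinearMap.contDiff).comp hσ
  have hσ₂ : ∀ q, T₂ ((Complex.conjCLE : ℂ ≃L[ℝ] ℂ) (σ q)) = q := by
    intro q
    show T₁ ((Complex.conjCLE : ℂ ≃L[ℝ] ℂ) ((Complex.conjCLE : ℂ ≃L[ℝ] ℂ) (σ q))) = q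
    have hcc : (Complex.conjCLE : ℂ ≃L[ℝ] ℂ) ((Complex.conjCLE : ℂ ≃L[ℝ] ℂ) (σ q)) = σ q := by
      simp [Complex.conjCLE_apply]
    rw [hcc]
    exact hσ₁ q
  have comp₁ : ContDiffOn ℝ 2 (fun q => G₁ (T₁ (σ q))) U := by
    have := hc₁.comp (hσ.contDiffOn) (fun q hq => by
      show T₁ (σ q) ∈ U
      rw [hσ₁]; exact hq)
    exact this
  have comp₂ : ContDiffOn ℝ 2
      (fun q => G₂ (T₂ ((Complex.conjCLE : ℂ ≃L[ℝ] ℂ) (σ q)))) U := by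
    have := hc₂.comp (hκ.contDiffOn) (fun q hq => by
      show T₂ ((Complex.conjCLE : ℂ ≃L[ℝ] ℂ) (σ q)) ∈ U
      rw [hσ₂]; exact hq)
    exact this
  have ePu : pdu η = fun q =>
      (G₁ (T₁ (σ q)) + G₂ (T₂ ((Complex.conjCLE : ℂ ≃L[ℝ] ℂ) (σ q)))) / 2 := by
    funext q
    rw [hσ₁, hσ₂, hG₁, hG₂]
    ring
  have eQv : pdv η = fun q =>
      (G₂ (T₂ ((Complex.conjCLE : ℂ ≃L[ℝ] ℂ) (σ q))) - G₁ (T₁ (σ q))) / (2 * I) := by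
    funext q
    rw [hσ₁, hσ₂, hG₁, hG₂]
    field_simp
    ring
  constructor
  · rw [ePu]; exact (comp₁.add comp₂).div_const 2
  · rw [eQv]; exact (comp₂.sub comp₁).div_const (2 * I)

set_option maxHeartbeats 2000000 in
lemma alg {e P0 Q0 a Su Sv Suu Svv Au Av Auu Avv Lu Lv Luu Lvv Pu Pv Qu Qv A1 A2 A3 A4 B1 B2 C1 C2 : ℂ}
    (he : e ≠ 0) (hS : P0^2 + Q0^2 ≠ 0)
    (ha : a = (P0^2 + Q0^2) / e^2)
    (R1 : Qu = Pv) (R2 : Pu + Qv = 0)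
    (R3 : B1 = A3) (R4 : B2 = A4) (R5 : A1 + C1 = 0) (R6 : A2 + C2 = 0)
    (R7 : A3 = A2) (R8 : C1 = B2)
    (E1u : Su = 2*(P0*Pu) + 2*(Q0*Qu))
    (E1v : Sv = 2*(P0*Pv) + 2*(Q0*Qv))
    (E2u : Suu = 2*(P0*A1 + Pu*Pu) + 2*(Q0*B1 + Qu*Qu))
    (E2v : Svv = 2*(P0*A4 + Pv*Pv) + 2*(Q0*C2 + Qv*Qv))
    (E3u : Su = a*(e*P0 + e*P0) + (e*e)*Au)
    (E3v : Sv = a*(e*Q0 + e*Q0) + (e*e)*Av)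
    (E4u : Suu = a*((e*Pu + P0*P0) + (e*Pu + P0*P0)) + (e*P0 + e*P0)*Au + ((e*e)*Auu + Au*(e*P0 + e*P0)))
    (E4v : Svv = a*((e*Qv + Q0*Q0) + (e*Qv + Q0*Q0)) + (e*Q0 + e*Q0)*Av + ((e*e)*Avv + Av*(e*Q0 + e*Q0)))
    (E5u : Au = a*Lu) (E5v : Av = a*Lv)
    (E6u : Auu = a*Luu + Lu*Au) (E6v : Avv = a*Lvv + Lv*Av) :
    Luu + Lvv = 2*a := by
  have he2 : e*e ≠ 0 := mul_ne_zero he he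
  have ha0 : a ≠ 0 := by rw [ha]; exact div_ne_zero hS (pow_ne_zero 2 he)
  have hQv : Qv = -Pu := by linear_combination R2
  have hB1 : B1 = A2 := by linear_combination R3 + R7
  have hA4 : A4 = -A1 := by linear_combination -R4 - R8 + R5
  have hC2 : C2 = -A2 := by linear_combination R6
  have hAu : Au = (Su - a*(e*P0 + e*P0))/(e*e) := by
    rw [eq_div_iff he2]; linear_combination -E3u
  have hAv : Av = (Sv - a*(e*Q0 + e*Q0))/(e*e) := by
    rw [eq_div_iff he2]; linear_combination -E3v
  have hAuu : Auu = (Suu - a*((e*Pu + P0*P0) + (e*Pu + P0*P0)) - (e*P0 + e*P0)*Au - Au*(e*P0 + e*P0))/(e*e) := by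
    rw [eq_div_iff he2]; linear_combination -E4u
  have hAvv : Avv = (Svv - a*((e*Qv + Q0*Q0) + (e*Qv + Q0*Q0)) - (e*Q0 + e*Q0)*Av - Av*(e*Q0 + e*Q0))/(e*e) := by
    rw [eq_div_iff he2]; linear_combination -E4v
  have c1 : a^2*Luu = a*Auu - Au^2 := by linear_combination -a*E6u + Au*E5u
  have c2 : a^2*Lvv = a*Avv - Av^2 := by linear_combination -a*E6v + Av*E5v
  have main : a*Auu + a*Avv - Au^2 - Av^2 = 2*a^3 := by
    rw [hAuu, hAvv, hAu, hAv, E1u, E1v, E2u, E2v, hB1, hA4, hC2, R1, hQv, ha]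
    ring_nf
    field_simp
    ring
  have hfin : a^2*(Luu + Lvv) = a^2*(2*a) := by linear_combination c1 + c2 + main
  exact mul_left_cancel₀ (pow_ne_zero 2 ha0) hfin

set_option maxHeartbeats 2000000 in
theorem stmt2 (U : Set (ℝ × ℝ)) (hU : IsOpen U) (η : ℝ × ℝ → ℂ)
    (hη : ContDiffOn ℝ 2 η U)
    (hharm : ∀ p ∈ U, lap η p = 0)
    (hne : ∀ p ∈ U, η p ≠ 0)
    (hdne : ∀ p ∈ U, (pdu η p) ^ 2 + (pdv η p) ^ 2 ≠ 0)
    (α : ℝ × ℝ → ℂ)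
    (hα : ∀ p, α p = ((pdu η p) ^ 2 + (pdv η p) ^ 2) / (η p) ^ 2)
    (L : ℝ × ℝ → ℂ) (hL : ContDiffOn ℝ 2 L U)
    (hlog : ∀ p ∈ U, Complex.exp (L p) = α p) :
    ∀ p ∈ U, lap L p = 2 * α p := by
  obtain ⟨hPC0, hQC0⟩ := smooth_pd hU hη hharm
  have hPC : ContDiffOn ℝ 2 (fun r => fderiv ℝ η r ((1:ℝ),(0:ℝ))) U := hPC0
  have hQC : ContDiffOn ℝ 2 (fun r => fderiv ℝ η r ((0:ℝ),(1:ℝ))) U := hQC0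
  have hdAt : ∀ (f : ℝ × ℝ → ℂ), ContDiffOn ℝ 2 f U → ∀ q ∈ U, DifferentiableAt ℝ f q :=
    fun f hf q hq => ((hf.differentiableOn (by norm_num)) q hq).differentiableAt (hU.mem_nhds hq)
  have hdFd : ∀ (f : ℝ × ℝ → ℂ), ContDiffOn ℝ 2 f U → ∀ q ∈ U, DifferentiableAt ℝ (fderiv ℝ f) q :=
    fun f hf q hq => (((hf.fderiv_of_isOpen (m := 1) hU (by norm_num)).differentiableOn one_ne_zero) q hq).differentiableAt (hU.mem_nhds hq)
  have hdD : ∀ (f : ℝ × ℝ → ℂ), ContDiffOn ℝ 2 f U → ∀ (w : ℝ × ℝ), ∀ q ∈ U,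
      DifferentiableAt ℝ (fun r => fderiv ℝ f r w) q :=
    fun f hf w q hq => (hdFd f hf q hq).clm_apply (differentiableAt_const _)
  have hSC : ContDiffOn ℝ 2 (fun r => (fderiv ℝ η r ((1:ℝ),(0:ℝ)))^2 + (fderiv ℝ η r ((0:ℝ),(1:ℝ)))^2) U := (hPC.pow 2).add (hQC.pow 2)
  have hαS : ∀ q, α q = (fun r => (fderiv ℝ η r ((1:ℝ),(0:ℝ)))^2 + (fderiv ℝ η r ((0:ℝ),(1:ℝ)))^2) q / (η q)^2 := fun q => hα q
  have hαC : ContDiffOn ℝ 2 α U := by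
    have h1 : ContDiffOn ℝ 2 (fun q => ((fderiv ℝ η q ((1:ℝ),(0:ℝ)))^2 + (fderiv ℝ η q ((0:ℝ),(1:ℝ)))^2) * ((η q)^2)⁻¹) U :=
      hSC.mul ((hη.pow 2).inv (fun q hq => pow_ne_zero 2 (hne q hq)))
    refine h1.congr (fun q hq => ?_)
    rw [hαS q, div_eq_mul_inv]
  have dη := hdAt η hη
  have dP := hdAt _ hPC
  have dQ := hdAt _ hQC
  have dα := hdAt α hαC
  have dL := hdAt L hL
  intro p hp
  -- symmetry and harmonicity, as identities on U
  have hsymU : ∀ q ∈ U, fderiv ℝ (fun r => fderiv ℝ η r ((0:ℝ),(1:ℝ))) q ((1:ℝ),(0:ℝ)) = fderiv ℝ (fun r => fderiv ℝ η r ((1:ℝ),(0:ℝ))) q ((0:ℝ),(1:ℝ)) :=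
    fun q hq => fd_swap (hdFd η hη q hq)
      ((hη.contDiffAt (hU.mem_nhds hq)).isSymmSndFDerivAt (by simp [minSmoothness_of_isRCLikeNormedField]))
  have hharmU : ∀ q ∈ U, fderiv ℝ (fun r => fderiv ℝ η r ((1:ℝ),(0:ℝ))) q ((1:ℝ),(0:ℝ)) + fderiv ℝ (fun r => fderiv ℝ η r ((0:ℝ),(1:ℝ))) q ((0:ℝ),(1:ℝ)) = 0 :=
    fun q hq => hharm q hq
  -- first-order relations at p
  have R1 : fderiv ℝ (fun r => fderiv ℝ η r ((0:ℝ),(1:ℝ))) p ((1:ℝ),(0:ℝ)) = fderiv ℝ (fun r => fderiv ℝ η r ((1:ℝ),(0:ℝ))) p ((0:ℝ),(1:ℝ)) := hsymU p hp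
  have R2 : fderiv ℝ (fun r => fderiv ℝ η r ((1:ℝ),(0:ℝ))) p ((1:ℝ),(0:ℝ)) + fderiv ℝ (fun r => fderiv ℝ η r ((0:ℝ),(1:ℝ))) p ((0:ℝ),(1:ℝ)) = 0 := hharmU p hp
  -- third-order relations
  have K1 : fderiv ℝ (fun q => fderiv ℝ (fun r => fderiv ℝ η r ((0:ℝ),(1:ℝ))) q ((1:ℝ),(0:ℝ))) p = fderiv ℝ (fun q => fderiv ℝ (fun r => fderiv ℝ η r ((1:ℝ),(0:ℝ))) q ((0:ℝ),(1:ℝ))) p :=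
    fd_congr hU hp hsymU
  have R3 : fderiv ℝ (fun r => fderiv ℝ (fun r => fderiv ℝ η r ((0:ℝ),(1:ℝ))) r ((1:ℝ),(0:ℝ))) p ((1:ℝ),(0:ℝ)) = fderiv ℝ (fun r => fderiv ℝ (fun r => fderiv ℝ η r ((1:ℝ),(0:ℝ))) r ((0:ℝ),(1:ℝ))) p ((1:ℝ),(0:ℝ)) := DFunLike.congr_fun K1 ((1:ℝ),(0:ℝ))
  have R4 : fderiv ℝ (fun r => fderiv ℝ (fun r => fderiv ℝ η r ((0:ℝ),(1:ℝ))) r ((1:ℝ),(0:ℝ))) p ((0:ℝ),(1:ℝ)) = fderiv ℝ (fun r => fderiv ℝ (fun r => fderiv ℝ η r ((1:ℝ),(0:ℝ))) r ((0:ℝ),(1:ℝ))) p ((0:ℝ),(1:ℝ)) := DFunLike.congr_fun K1 ((0:ℝ),(1:ℝ))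
  have K2 : fderiv ℝ (fun q => fderiv ℝ (fun r => fderiv ℝ η r ((1:ℝ),(0:ℝ))) q ((1:ℝ),(0:ℝ)) + fderiv ℝ (fun r => fderiv ℝ η r ((0:ℝ),(1:ℝ))) q ((0:ℝ),(1:ℝ))) p
      = fderiv ℝ (fun _ => (0:ℂ)) p :=
    fd_congr hU hp (fun q hq => hharmU q hq)
  have R5 : fderiv ℝ (fun r => fderiv ℝ (fun r => fderiv ℝ η r ((1:ℝ),(0:ℝ))) r ((1:ℝ),(0:ℝ))) p ((1:ℝ),(0:ℝ)) + fderiv ℝ (fun r => fderiv ℝ (fun r => fderiv ℝ η r ((0:ℝ),(1:ℝ))) r ((0:ℝ),(1:ℝ))) p ((1:ℝ),(0:ℝ)) = 0 := by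
    have h1 := DFunLike.congr_fun K2 ((1:ℝ),(0:ℝ))
    rw [fd_add (hdD _ hPC ((1:ℝ),(0:ℝ)) p hp) (hdD _ hQC ((0:ℝ),(1:ℝ)) p hp)] at h1
    simpa using h1
  have R6 : fderiv ℝ (fun r => fderiv ℝ (fun r => fderiv ℝ η r ((1:ℝ),(0:ℝ))) r ((1:ℝ),(0:ℝ))) p ((0:ℝ),(1:ℝ)) + fderiv ℝ (fun r => fderiv ℝ (fun r => fderiv ℝ η r ((0:ℝ),(1:ℝ))) r ((0:ℝ),(1:ℝ))) p ((0:ℝ),(1:ℝ)) = 0 := by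
    have h1 := DFunLike.congr_fun K2 ((0:ℝ),(1:ℝ))
    rw [fd_add (hdD _ hPC ((1:ℝ),(0:ℝ)) p hp) (hdD _ hQC ((0:ℝ),(1:ℝ)) p hp)] at h1
    simpa using h1
  have R7 : fderiv ℝ (fun r => fderiv ℝ (fun r => fderiv ℝ η r ((1:ℝ),(0:ℝ))) r ((0:ℝ),(1:ℝ))) p ((1:ℝ),(0:ℝ)) = fderiv ℝ (fun r => fderiv ℝ (fun r => fderiv ℝ η r ((1:ℝ),(0:ℝ))) r ((1:ℝ),(0:ℝ))) p ((0:ℝ),(1:ℝ)) :=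
    fd_swap (hdFd _ hPC p hp) ((hPC.contDiffAt (hU.mem_nhds hp)).isSymmSndFDerivAt (by simp [minSmoothness_of_isRCLikeNormedField]))
  have R8 : fderiv ℝ (fun r => fderiv ℝ (fun r => fderiv ℝ η r ((0:ℝ),(1:ℝ))) r ((0:ℝ),(1:ℝ))) p ((1:ℝ),(0:ℝ)) = fderiv ℝ (fun r => fderiv ℝ (fun r => fderiv ℝ η r ((0:ℝ),(1:ℝ))) r ((1:ℝ),(0:ℝ))) p ((0:ℝ),(1:ℝ)) :=
    fd_swap (hdFd _ hQC p hp) ((hQC.contDiffAt (hU.mem_nhds hp)).isSymmSndFDerivAt (by simp [minSmoothness_of_isRCLikeNormedField]))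
  -- first-order identity for S on U (two directions)
  have I1u : ∀ q ∈ U, fderiv ℝ (fun r => (fderiv ℝ η r ((1:ℝ),(0:ℝ)))^2 + (fderiv ℝ η r ((0:ℝ),(1:ℝ)))^2) q ((1:ℝ),(0:ℝ)) = 2*((fun r => fderiv ℝ η r ((1:ℝ),(0:ℝ))) q * fderiv ℝ (fun r => fderiv ℝ η r ((1:ℝ),(0:ℝ))) q ((1:ℝ),(0:ℝ))) + 2*((fun r => fderiv ℝ η r ((0:ℝ),(1:ℝ))) q * fderiv ℝ (fun r => fderiv ℝ η r ((0:ℝ),(1:ℝ))) q ((1:ℝ),(0:ℝ))) := by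
    intro q hq
    have hfe : fderiv ℝ (fun r => (fderiv ℝ η r ((1:ℝ),(0:ℝ)))^2 + (fderiv ℝ η r ((0:ℝ),(1:ℝ)))^2) q = fderiv ℝ (fun r => (fun r => fderiv ℝ η r ((1:ℝ),(0:ℝ))) r * (fun r => fderiv ℝ η r ((1:ℝ),(0:ℝ))) r + (fun r => fderiv ℝ η r ((0:ℝ),(1:ℝ))) r * (fun r => fderiv ℝ η r ((0:ℝ),(1:ℝ))) r) q := by
      apply congrArg (fun f => fderiv ℝ f q)
      funext r
      ring
    rw [hfe, fd_add ((dP q hq).fun_mul (dP q hq)) ((dQ q hq).fun_mul (dQ q hq)),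
      fd_mul (dP q hq) (dP q hq), fd_mul (dQ q hq) (dQ q hq)]
    ring
  have I1v : ∀ q ∈ U, fderiv ℝ (fun r => (fderiv ℝ η r ((1:ℝ),(0:ℝ)))^2 + (fderiv ℝ η r ((0:ℝ),(1:ℝ)))^2) q ((0:ℝ),(1:ℝ)) = 2*((fun r => fderiv ℝ η r ((1:ℝ),(0:ℝ))) q * fderiv ℝ (fun r => fderiv ℝ η r ((1:ℝ),(0:ℝ))) q ((0:ℝ),(1:ℝ))) + 2*((fun r => fderiv ℝ η r ((0:ℝ),(1:ℝ))) q * fderiv ℝ (fun r => fderiv ℝ η r ((0:ℝ),(1:ℝ))) q ((0:ℝ),(1:ℝ))) := by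
    intro q hq
    have hfe : fderiv ℝ (fun r => (fderiv ℝ η r ((1:ℝ),(0:ℝ)))^2 + (fderiv ℝ η r ((0:ℝ),(1:ℝ)))^2) q = fderiv ℝ (fun r => (fun r => fderiv ℝ η r ((1:ℝ),(0:ℝ))) r * (fun r => fderiv ℝ η r ((1:ℝ),(0:ℝ))) r + (fun r => fderiv ℝ η r ((0:ℝ),(1:ℝ))) r * (fun r => fderiv ℝ η r ((0:ℝ),(1:ℝ))) r) q := by
      apply congrArg (fun f => fderiv ℝ f q)
      funext r
      ring
    rw [hfe, fd_add ((dP q hq).fun_mul (dP q hq)) ((dQ q hq).fun_mul (dQ q hq)),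
      fd_mul (dP q hq) (dP q hq), fd_mul (dQ q hq) (dQ q hq)]
    ring
  -- identity S = α * η² on U, differentiated (two directions)
  have hST : ∀ r ∈ U, (fun r => (fderiv ℝ η r ((1:ℝ),(0:ℝ)))^2 + (fderiv ℝ η r ((0:ℝ),(1:ℝ)))^2) r = α r * (η r * η r) := by
    intro r hr
    rw [hαS r, div_mul_eq_mul_div, eq_div_iff (pow_ne_zero 2 (hne r hr))]
    ring
  have I2u : ∀ q ∈ U, fderiv ℝ (fun r => (fderiv ℝ η r ((1:ℝ),(0:ℝ)))^2 + (fderiv ℝ η r ((0:ℝ),(1:ℝ)))^2) q ((1:ℝ),(0:ℝ)) = α q * (η q * fderiv ℝ η q ((1:ℝ),(0:ℝ)) + η q * fderiv ℝ η q ((1:ℝ),(0:ℝ))) + (η q * η q) * fderiv ℝ α q ((1:ℝ),(0:ℝ)) := by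
    intro q hq
    have hc : fderiv ℝ (fun r => (fderiv ℝ η r ((1:ℝ),(0:ℝ)))^2 + (fderiv ℝ η r ((0:ℝ),(1:ℝ)))^2) q = fderiv ℝ (fun r => α r * (η r * η r)) q := fd_congr hU hq hST
    rw [hc, fd_mul (dα q hq) ((dη q hq).fun_mul (dη q hq)), fd_mul (dη q hq) (dη q hq)]
  have I2v : ∀ q ∈ U, fderiv ℝ (fun r => (fderiv ℝ η r ((1:ℝ),(0:ℝ)))^2 + (fderiv ℝ η r ((0:ℝ),(1:ℝ)))^2) q ((0:ℝ),(1:ℝ)) = α q * (η q * fderiv ℝ η q ((0:ℝ),(1:ℝ)) + η q * fderiv ℝ η q ((0:ℝ),(1:ℝ))) + (η q * η q) * fderiv ℝ α q ((0:ℝ),(1:ℝ)) := by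
    intro q hq
    have hc : fderiv ℝ (fun r => (fderiv ℝ η r ((1:ℝ),(0:ℝ)))^2 + (fderiv ℝ η r ((0:ℝ),(1:ℝ)))^2) q = fderiv ℝ (fun r => α r * (η r * η r)) q := fd_congr hU hq hST
    rw [hc, fd_mul (dα q hq) ((dη q hq).fun_mul (dη q hq)), fd_mul (dη q hq) (dη q hq)]
  -- identity fderiv α = α * fderiv L on U
  have I3u : ∀ q ∈ U, fderiv ℝ α q ((1:ℝ),(0:ℝ)) = α q * fderiv ℝ L q ((1:ℝ),(0:ℝ)) := by
    intro q hq
    have hc : fderiv ℝ α q = fderiv ℝ (fun r => Complex.exp (L r)) q :=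
      fd_congr hU hq (fun r hr => (hlog r hr).symm)
    rw [hc, fd_exp (dL q hq), hlog q hq]
  have I3v : ∀ q ∈ U, fderiv ℝ α q ((0:ℝ),(1:ℝ)) = α q * fderiv ℝ L q ((0:ℝ),(1:ℝ)) := by
    intro q hq
    have hc : fderiv ℝ α q = fderiv ℝ (fun r => Complex.exp (L r)) q :=
      fd_congr hU hq (fun r hr => (hlog r hr).symm)
    rw [hc, fd_exp (dL q hq), hlog q hq]
  -- first-order values at p
  have E1u : fderiv ℝ (fun r => (fderiv ℝ η r ((1:ℝ),(0:ℝ)))^2 + (fderiv ℝ η r ((0:ℝ),(1:ℝ)))^2) p ((1:ℝ),(0:ℝ)) = 2*(fderiv ℝ η p ((1:ℝ),(0:ℝ))*fderiv ℝ (fun r => fderiv ℝ η r ((1:ℝ),(0:ℝ))) p ((1:ℝ),(0:ℝ))) + 2*(fderiv ℝ η p ((0:ℝ),(1:ℝ))*fderiv ℝ (fun r => fderiv ℝ η r ((0:ℝ),(1:ℝ))) p ((1:ℝ),(0:ℝ))) := I1u p hp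
  have E1v : fderiv ℝ (fun r => (fderiv ℝ η r ((1:ℝ),(0:ℝ)))^2 + (fderiv ℝ η r ((0:ℝ),(1:ℝ)))^2) p ((0:ℝ),(1:ℝ)) = 2*(fderiv ℝ η p ((1:ℝ),(0:ℝ))*fderiv ℝ (fun r => fderiv ℝ η r ((1:ℝ),(0:ℝ))) p ((0:ℝ),(1:ℝ))) + 2*(fderiv ℝ η p ((0:ℝ),(1:ℝ))*fderiv ℝ (fun r => fderiv ℝ η r ((0:ℝ),(1:ℝ))) p ((0:ℝ),(1:ℝ))) := I1v p hp
  have E3u : fderiv ℝ (fun r => (fderiv ℝ η r ((1:ℝ),(0:ℝ)))^2 + (fderiv ℝ η r ((0:ℝ),(1:ℝ)))^2) p ((1:ℝ),(0:ℝ)) = α p*(η p*fderiv ℝ η p ((1:ℝ),(0:ℝ)) + η p*fderiv ℝ η p ((1:ℝ),(0:ℝ))) + (η p*η p)*fderiv ℝ α p ((1:ℝ),(0:ℝ)) := I2u p hp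
  have E3v : fderiv ℝ (fun r => (fderiv ℝ η r ((1:ℝ),(0:ℝ)))^2 + (fderiv ℝ η r ((0:ℝ),(1:ℝ)))^2) p ((0:ℝ),(1:ℝ)) = α p*(η p*fderiv ℝ η p ((0:ℝ),(1:ℝ)) + η p*fderiv ℝ η p ((0:ℝ),(1:ℝ))) + (η p*η p)*fderiv ℝ α p ((0:ℝ),(1:ℝ)) := I2v p hp
  have E5u : fderiv ℝ α p ((1:ℝ),(0:ℝ)) = α p*fderiv ℝ L p ((1:ℝ),(0:ℝ)) := I3u p hp
  have E5v : fderiv ℝ α p ((0:ℝ),(1:ℝ)) = α p*fderiv ℝ L p ((0:ℝ),(1:ℝ)) := I3v p hp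
  -- second-order: differentiate I1 at p
  have E2u : fderiv ℝ (fun r => fderiv ℝ (fun r => (fderiv ℝ η r ((1:ℝ),(0:ℝ)))^2 + (fderiv ℝ η r ((0:ℝ),(1:ℝ)))^2) r ((1:ℝ),(0:ℝ))) p ((1:ℝ),(0:ℝ)) = 2*(fderiv ℝ η p ((1:ℝ),(0:ℝ))*fderiv ℝ (fun r => fderiv ℝ (fun r => fderiv ℝ η r ((1:ℝ),(0:ℝ))) r ((1:ℝ),(0:ℝ))) p ((1:ℝ),(0:ℝ)) + fderiv ℝ (fun r => fderiv ℝ η r ((1:ℝ),(0:ℝ))) p ((1:ℝ),(0:ℝ))*fderiv ℝ (fun r => fderiv ℝ η r ((1:ℝ),(0:ℝ))) p ((1:ℝ),(0:ℝ))) + 2*(fderiv ℝ η p ((0:ℝ),(1:ℝ))*fderiv ℝ (fun r => fderiv ℝ (fun r => fderiv ℝ η r ((0:ℝ),(1:ℝ))) r ((1:ℝ),(0:ℝ))) p ((1:ℝ),(0:ℝ)) + fderiv ℝ (fun r => fderiv ℝ η r ((0:ℝ),(1:ℝ))) p ((1:ℝ),(0:ℝ))*fderiv ℝ (fun r => fderiv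 ℝ η r ((0:ℝ),(1:ℝ))) p ((1:ℝ),(0:ℝ))) := by
    have hc := fd_congr hU hp I1u
    have happ := DFunLike.congr_fun hc ((1:ℝ),(0:ℝ))
    rw [happ, fd_add (((dP p hp).fun_mul (hdD _ hPC ((1:ℝ),(0:ℝ)) p hp)).const_mul 2) (((dQ p hp).fun_mul (hdD _ hQC ((1:ℝ),(0:ℝ)) p hp)).const_mul 2),
      fd_const_mul ((dP p hp).fun_mul (hdD _ hPC ((1:ℝ),(0:ℝ)) p hp)),
      fd_const_mul ((dQ p hp).fun_mul (hdD _ hQC ((1:ℝ),(0:ℝ)) p hp)),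
      fd_mul (dP p hp) (hdD _ hPC ((1:ℝ),(0:ℝ)) p hp), fd_mul (dQ p hp) (hdD _ hQC ((1:ℝ),(0:ℝ)) p hp)]
    all_goals ring
  have E2v : fderiv ℝ (fun r => fderiv ℝ (fun r => (fderiv ℝ η r ((1:ℝ),(0:ℝ)))^2 + (fderiv ℝ η r ((0:ℝ),(1:ℝ)))^2) r ((0:ℝ),(1:ℝ))) p ((0:ℝ),(1:ℝ)) = 2*(fderiv ℝ η p ((1:ℝ),(0:ℝ))*fderiv ℝ (fun r => fderiv ℝ (fun r => fderiv ℝ η r ((1:ℝ),(0:ℝ))) r ((0:ℝ),(1:ℝ))) p ((0:ℝ),(1:ℝ)) + fderiv ℝ (fun r => fderiv ℝ η r ((1:ℝ),(0:ℝ))) p ((0:ℝ),(1:ℝ))*fderiv ℝ (fun r => fderiv ℝ η r ((1:ℝ),(0:ℝ))) p ((0:ℝ),(1:ℝ))) + 2*(fderiv ℝ η p ((0:ℝ),(1:ℝ))*fderiv ℝ (fun r => fderiv ℝ (fun r => fderiv ℝ η r ((0:ℝ),(1:ℝ))) r ((0:ℝ),(1:ℝ))) p ((0:ℝ),(1:ℝ))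 + fderiv ℝ (fun r => fderiv ℝ η r ((0:ℝ),(1:ℝ))) p ((0:ℝ),(1:ℝ))*fderiv ℝ (fun r => fderiv ℝ η r ((0:ℝ),(1:ℝ))) p ((0:ℝ),(1:ℝ))) := by
    have hc := fd_congr hU hp I1v
    have happ := DFunLike.congr_fun hc ((0:ℝ),(1:ℝ))
    rw [happ, fd_add (((dP p hp).fun_mul (hdD _ hPC ((0:ℝ),(1:ℝ)) p hp)).const_mul 2) (((dQ p hp).fun_mul (hdD _ hQC ((0:ℝ),(1:ℝ)) p hp)).const_mul 2),
      fd_const_mul ((dP p hp).fun_mul (hdD _ hPC ((0:ℝ),(1:ℝ)) p hp)),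
      fd_const_mul ((dQ p hp).fun_mul (hdD _ hQC ((0:ℝ),(1:ℝ)) p hp)),
      fd_mul (dP p hp) (hdD _ hPC ((0:ℝ),(1:ℝ)) p hp), fd_mul (dQ p hp) (hdD _ hQC ((0:ℝ),(1:ℝ)) p hp)]
    all_goals ring
  -- second-order: differentiate I2 at p
  have E4u : fderiv ℝ (fun r => fderiv ℝ (fun r => (fderiv ℝ η r ((1:ℝ),(0:ℝ)))^2 + (fderiv ℝ η r ((0:ℝ),(1:ℝ)))^2) r ((1:ℝ),(0:ℝ))) p ((1:ℝ),(0:ℝ)) = α p*((η p*fderiv ℝ (fun r => fderiv ℝ η r ((1:ℝ),(0:ℝ))) p ((1:ℝ),(0:ℝ)) + fderiv ℝ η p ((1:ℝ),(0:ℝ))*fderiv ℝ η p ((1:ℝ),(0:ℝ))) + (η p*fderiv ℝ (fun r => fderiv ℝ η r ((1:ℝ),(0:ℝ))) p ((1:ℝ),(0:ℝ)) + fderiv ℝ η p ((1:ℝ),(0:ℝ))*fderiv ℝ η p ((1:ℝ),(0:ℝ)))) + (η p*fderiv ℝ η p ((1:ℝ),(0:ℝ)) + η p*fderiv ℝ η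 p ((1:ℝ),(0:ℝ)))*fderiv ℝ α p ((1:ℝ),(0:ℝ)) + ((η p*η p)*fderiv ℝ (fun r => fderiv ℝ α r ((1:ℝ),(0:ℝ))) p ((1:ℝ),(0:ℝ)) + fderiv ℝ α p ((1:ℝ),(0:ℝ))*(η p*fderiv ℝ η p ((1:ℝ),(0:ℝ)) + η p*fderiv ℝ η p ((1:ℝ),(0:ℝ)))) := by
    have hc := fd_congr hU hp I2u
    have happ := DFunLike.congr_fun hc ((1:ℝ),(0:ℝ))
    rw [happ]
    rw [fd_add ((dα p hp).fun_mul (((dη p hp).fun_mul (hdD η hη ((1:ℝ),(0:ℝ)) p hp)).fun_add ((dη p hp).fun_mul (hdD η hη ((1:ℝ),(0:ℝ)) p hp)))) (((dη p hp).fun_mul (dη p hp)).fun_mul (hdD α hαC ((1:ℝ),(0:ℝ)) p hp))]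
    rw [fd_mul (dα p hp) (((dη p hp).fun_mul (hdD η hη ((1:ℝ),(0:ℝ)) p hp)).fun_add ((dη p hp).fun_mul (hdD η hη ((1:ℝ),(0:ℝ)) p hp)))]
    rw [fd_add ((dη p hp).fun_mul (hdD η hη ((1:ℝ),(0:ℝ)) p hp)) ((dη p hp).fun_mul (hdD η hη ((1:ℝ),(0:ℝ)) p hp))]
    rw [fd_mul (dη p hp) (hdD η hη ((1:ℝ),(0:ℝ)) p hp)]
    rw [fd_mul ((dη p hp).fun_mul (dη p hp)) (hdD α hαC ((1:ℝ),(0:ℝ)) p hp)]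
    rw [fd_mul (dη p hp) (dη p hp)]
    all_goals ring
  have E4v : fderiv ℝ (fun r => fderiv ℝ (fun r => (fderiv ℝ η r ((1:ℝ),(0:ℝ)))^2 + (fderiv ℝ η r ((0:ℝ),(1:ℝ)))^2) r ((0:ℝ),(1:ℝ))) p ((0:ℝ),(1:ℝ)) = α p*((η p*fderiv ℝ (fun r => fderiv ℝ η r ((0:ℝ),(1:ℝ))) p ((0:ℝ),(1:ℝ)) + fderiv ℝ η p ((0:ℝ),(1:ℝ))*fderiv ℝ η p ((0:ℝ),(1:ℝ))) + (η p*fderiv ℝ (fun r => fderiv ℝ η r ((0:ℝ),(1:ℝ))) p ((0:ℝ),(1:ℝ)) + fderiv ℝ η p ((0:ℝ),(1:ℝ))*fderiv ℝ η p ((0:ℝ),(1:ℝ)))) + (η p*fderiv ℝ η p ((0:ℝ),(1:ℝ)) + η p*fderiv ℝ η p ((0:ℝ),(1:ℝ)))*fderiv ℝ α p ((0:ℝ),(1:ℝ)) + ((η p*η p)*fderiv ℝ (fun r => fderiv ℝ α r ((0:ℝ),(1:ℝ))) p ((0:ℝ),(1:ℝ)) + fderiv ℝ α p ((0:ℝ),(1:ℝ))*(η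 p*fderiv ℝ η p ((0:ℝ),(1:ℝ)) + η p*fderiv ℝ η p ((0:ℝ),(1:ℝ)))) := by
    have hc := fd_congr hU hp I2v
    have happ := DFunLike.congr_fun hc ((0:ℝ),(1:ℝ))
    rw [happ]
    rw [fd_add ((dα p hp).fun_mul (((dη p hp).fun_mul (hdD η hη ((0:ℝ),(1:ℝ)) p hp)).fun_add ((dη p hp).fun_mul (hdD η hη ((0:ℝ),(1:ℝ)) p hp)))) (((dη p hp).fun_mul (dη p hp)).fun_mul (hdD α hαC ((0:ℝ),(1:ℝ)) p hp))]
    rw [fd_mul (dα p hp) (((dη p hp).fun_mul (hdD η hη ((0:ℝ),(1:ℝ)) p hp)).fun_add ((dη p hp).fun_mul (hdD η hη ((0:ℝ),(1:ℝ)) p hp)))]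
    rw [fd_add ((dη p hp).fun_mul (hdD η hη ((0:ℝ),(1:ℝ)) p hp)) ((dη p hp).fun_mul (hdD η hη ((0:ℝ),(1:ℝ)) p hp))]
    rw [fd_mul (dη p hp) (hdD η hη ((0:ℝ),(1:ℝ)) p hp)]
    rw [fd_mul ((dη p hp).fun_mul (dη p hp)) (hdD α hαC ((0:ℝ),(1:ℝ)) p hp)]
    rw [fd_mul (dη p hp) (dη p hp)]
    all_goals ring
  -- second-order: differentiate I3 at p
  have E6u : fderiv ℝ (fun r => fderiv ℝ α r ((1:ℝ),(0:ℝ))) p ((1:ℝ),(0:ℝ)) = α p*fderiv ℝ (fun r => fderiv ℝ L r ((1:ℝ),(0:ℝ))) p ((1:ℝ),(0:ℝ)) + fderiv ℝ L p ((1:ℝ),(0:ℝ))*fderiv ℝ α p ((1:ℝ),(0:ℝ)) := by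
    have hc := fd_congr hU hp I3u
    have happ := DFunLike.congr_fun hc ((1:ℝ),(0:ℝ))
    rw [happ, fd_mul (dα p hp) (hdD L hL ((1:ℝ),(0:ℝ)) p hp)]
  have E6v : fderiv ℝ (fun r => fderiv ℝ α r ((0:ℝ),(1:ℝ))) p ((0:ℝ),(1:ℝ)) = α p*fderiv ℝ (fun r => fderiv ℝ L r ((0:ℝ),(1:ℝ))) p ((0:ℝ),(1:ℝ)) + fderiv ℝ L p ((0:ℝ),(1:ℝ))*fderiv ℝ α p ((0:ℝ),(1:ℝ)) := by
    have hc := fd_congr hU hp I3v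
    have happ := DFunLike.congr_fun hc ((0:ℝ),(1:ℝ))
    rw [happ, fd_mul (dα p hp) (hdD L hL ((0:ℝ),(1:ℝ)) p hp)]
  have hSne : (fderiv ℝ η p ((1:ℝ),(0:ℝ)))^2 + (fderiv ℝ η p ((0:ℝ),(1:ℝ)))^2 ≠ 0 := hdne p hp
  have haP : α p = ((fderiv ℝ η p ((1:ℝ),(0:ℝ)))^2 + (fderiv ℝ η p ((0:ℝ),(1:ℝ)))^2) / (η p)^2 := hα p
  show fderiv ℝ (fun r => fderiv ℝ L r ((1:ℝ),(0:ℝ))) p ((1:ℝ),(0:ℝ)) + fderiv ℝ (fun r => fderiv ℝ L r ((0:ℝ),(1:ℝ))) p ((0:ℝ),(1:ℝ)) = 2 * α p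
  exact alg (hne p hp) hSne haP R1 R2 R3 R4 R5 R6 R7 R8 E1u E1v E2u E2v E3u E3v E4u E4v E5u E5v E6u E6v
end

section
/- Let η : U → ℝ be a real harmonic function on an open subset U of ℝ² with η ≠ 0 and (η_u)² + (η_v)² ≠ 0 on U. Then the positive real function ν = ((η_u)² + (η_v)²)/η² satisfies Δ(ln ν) − 2ν = 0. -/
/-!
Transport `η` to `g = η ∘ (ℂ ≃ ℝ × ℝ)`. Since `g` is harmonic, `F = g_x - i g_y = η_u - i η_v` is
holomorphic, so `log (η_u² + η_v²) = 2 log ‖F‖` is harmonic. Hence `Δ (log ν) = -2 Δ (log η)`, and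
for harmonic `η` the chain rule gives `Δ (log η) = -(η_u² + η_v²) / η² = -ν`.
-/

open Complex

open Filter Topology InnerProductSpace Laplacian

section PartialDerivatives

variable {E : Type*} [NormedAddCommGroup E] [NormedSpace ℝ E] {f g : ℝ × ℝ → E} {p : ℝ × ℝ}

theorem Filter.EventuallyEq.pdu_eq (h : f =ᶠ[𝓝 p] g) : pdu f p = pdu g p := by
  rw [pdu, pdu, h.fderiv_eq]

theorem Filter.EventuallyEq.pdv_eq (h : f =ᶠ[𝓝 p] g) : pdv f p = pdv g p := by
  rw [pdv, pdv, h.fderiv_eq]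

theorem Filter.EventuallyEq.lap_eq (h : f =ᶠ[𝓝 p] g) : lap f p = lap g p := by
  have hu : pdu f =ᶠ[𝓝 p] pdu g := h.eventuallyEq_nhds.mono fun _ hq => hq.pdu_eq
  have hv : pdv f =ᶠ[𝓝 p] pdv g := h.eventuallyEq_nhds.mono fun _ hq => hq.pdv_eq
  rw [lap, lap, hu.pdu_eq, hv.pdv_eq]

theorem ContDiffAt.eventually_differentiableAt (hf : ContDiffAt ℝ 2 f p) :
    ∀ᶠ q in 𝓝 p, DifferentiableAt ℝ f q :=
  (hf.eventually (by simp)).mono fun _ hq => hq.differentiableAt two_ne_zero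

theorem ContDiffAt.differentiableAt_pdu (hf : ContDiffAt ℝ 2 f p) :
    DifferentiableAt ℝ (pdu f) p :=
  ((hf.fderiv_right (m := 1) le_rfl).differentiableAt one_ne_zero).clm_apply
    (differentiableAt_const _)

theorem ContDiffAt.differentiableAt_pdv (hf : ContDiffAt ℝ 2 f p) :
    DifferentiableAt ℝ (pdv f) p :=
  ((hf.fderiv_right (m := 1) le_rfl).differentiableAt one_ne_zero).clm_apply
    (differentiableAt_const _)

theorem pdu_sub (hf : DifferentiableAt ℝ f p) (hg : DifferentiableAt ℝ g p) :
    pdu (fun q => f q - g q) p = pdu f p - pdu g p := by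
  simp [pdu, fderiv_fun_sub hf hg]

theorem pdv_sub (hf : DifferentiableAt ℝ f p) (hg : DifferentiableAt ℝ g p) :
    pdv (fun q => f q - g q) p = pdv f p - pdv g p := by
  simp [pdv, fderiv_fun_sub hf hg]

theorem lap_sub (hf : ContDiffAt ℝ 2 f p) (hg : ContDiffAt ℝ 2 g p) :
    lap (fun q => f q - g q) p = lap f p - lap g p := by
  have hd := hf.eventually_differentiableAt.and hg.eventually_differentiableAt
  have hu : pdu (fun q => f q - g q) =ᶠ[𝓝 p] fun q => pdu f q - pdu g q :=
    hd.mono fun q hq => pdu_sub hq.1 hq.2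
  have hv : pdv (fun q => f q - g q) =ᶠ[𝓝 p] fun q => pdv f q - pdv g q :=
    hd.mono fun q hq => pdv_sub hq.1 hq.2
  rw [lap, hu.pdu_eq, hv.pdv_eq, pdu_sub hf.differentiableAt_pdu hg.differentiableAt_pdu,
    pdv_sub hf.differentiableAt_pdv hg.differentiableAt_pdv, lap, lap]
  abel

end PartialDerivatives

section RealPartialDerivatives

variable {f g : ℝ × ℝ → ℝ} {p : ℝ × ℝ}

theorem pdu_mul (hf : DifferentiableAt ℝ f p) (hg : DifferentiableAt ℝ g p) :
    pdu (fun q => f q * g q) p = pdu f p * g p + f p * pdu g p := by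
  simp [pdu, fderiv_fun_mul hf hg]; ring

theorem pdv_mul (hf : DifferentiableAt ℝ f p) (hg : DifferentiableAt ℝ g p) :
    pdv (fun q => f q * g q) p = pdv f p * g p + f p * pdv g p := by
  simp [pdv, fderiv_fun_mul hf hg]; ring

theorem pdu_log (hf : DifferentiableAt ℝ f p) (h0 : f p ≠ 0) :
    pdu (fun q => Real.log (f q)) p = pdu f p / f p := by
  simp [pdu, fderiv.log hf h0, div_eq_inv_mul]

theorem pdv_log (hf : DifferentiableAt ℝ f p) (h0 : f p ≠ 0) :
    pdv (fun q => Real.log (f q)) p = pdv f p / f p := by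
  simp [pdv, fderiv.log hf h0, div_eq_inv_mul]

theorem pdu_const_mul (c : ℝ) (hf : DifferentiableAt ℝ f p) :
    pdu (fun q => c * f q) p = c * pdu f p := by
  simp [pdu, fderiv_const_mul hf]

theorem pdv_const_mul (c : ℝ) (hf : DifferentiableAt ℝ f p) :
    pdv (fun q => c * f q) p = c * pdv f p := by
  simp [pdv, fderiv_const_mul hf]

theorem lap_const_mul (c : ℝ) (hf : ContDiffAt ℝ 2 f p) :
    lap (fun q => c * f q) p = c * lap f p := by
  have hu : pdu (fun q => c * f q) =ᶠ[𝓝 p] fun q => c * pdu f q :=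
    hf.eventually_differentiableAt.mono fun _ hq => pdu_const_mul c hq
  have hv : pdv (fun q => c * f q) =ᶠ[𝓝 p] fun q => c * pdv f q :=
    hf.eventually_differentiableAt.mono fun _ hq => pdv_const_mul c hq
  rw [lap, hu.pdu_eq, hv.pdv_eq, pdu_const_mul c hf.differentiableAt_pdu,
    pdv_const_mul c hf.differentiableAt_pdv, lap, mul_add]

theorem lap_log (hf : ContDiffAt ℝ 2 f p) (h0 : f p ≠ 0) :
    lap (fun q => Real.log (f q)) p = lap f p / f p - (pdu f p ^ 2 + pdv f p ^ 2) / f p ^ 2 := by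
  have hlog : ContDiffAt ℝ 2 (fun q => Real.log (f q)) p := hf.log h0
  have hev := hf.eventually_differentiableAt.and (hf.continuousAt.eventually_ne h0)
  -- differentiating `pdu f = f * pdu (log f)` once more avoids a quotient rule
  have hu : pdu f =ᶠ[𝓝 p] fun q => f q * pdu (fun q => Real.log (f q)) q :=
    hev.mono fun q ⟨hq, hq0⟩ => by beta_reduce; rw [pdu_log hq hq0, mul_div_cancel₀ _ hq0]
  have hv : pdv f =ᶠ[𝓝 p] fun q => f q * pdv (fun q => Real.log (f q)) q :=
    hev.mono fun q ⟨hq, hq0⟩ => by beta_reduce; rw [pdv_log hq hq0, mul_div_cancel₀ _ hq0]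
  have hd := hf.differentiableAt two_ne_zero
  have huu := hu.pdu_eq
  have hvv := hv.pdv_eq
  rw [pdu_mul hd hlog.differentiableAt_pdu, pdu_log hd h0] at huu
  rw [pdv_mul hd hlog.differentiableAt_pdv, pdv_log hd h0] at hvv
  rw [lap, lap, huu, hvv]
  field_simp
  ring

end RealPartialDerivatives

section ComplexPlane

variable {E : Type*} [NormedAddCommGroup E] [NormedSpace ℝ E]

theorem pdu_comp_equivRealProdCLM (f : ℝ × ℝ → E) (z : ℂ) :
    pdu f (equivRealProdCLM z) = fderiv ℝ (f ∘ equivRealProdCLM) z 1 := by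
  simp [pdu, ContinuousLinearEquiv.comp_right_fderiv]

theorem pdv_comp_equivRealProdCLM (f : ℝ × ℝ → E) (z : ℂ) :
    pdv f (equivRealProdCLM z) = fderiv ℝ (f ∘ equivRealProdCLM) z I := by
  simp [pdv, ContinuousLinearEquiv.comp_right_fderiv]

theorem lap_eq_laplacian_comp_equivRealProdCLM {f : ℝ × ℝ → E} {p : ℝ × ℝ}
    (hf : ContDiffAt ℝ 2 f p) :
    lap f p = Δ (f ∘ equivRealProdCLM) (equivRealProdCLM.symm p) := by
  set z := equivRealProdCLM.symm p
  have hd : DifferentiableAt ℝ (fderiv ℝ (f ∘ equivRealProdCLM)) z :=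
    ((equivRealProdCLM.contDiffAt_comp_iff.2 hf).fderiv_right (m := 1) le_rfl).differentiableAt
      one_ne_zero
  have hu : pdu f ∘ equivRealProdCLM = fun w => fderiv ℝ (f ∘ equivRealProdCLM) w 1 :=
    funext (pdu_comp_equivRealProdCLM f)
  have hv : pdv f ∘ equivRealProdCLM = fun w => fderiv ℝ (f ∘ equivRealProdCLM) w I :=
    funext (pdv_comp_equivRealProdCLM f)
  rw [← equivRealProdCLM.apply_symm_apply p, lap, pdu_comp_equivRealProdCLM,
    pdv_comp_equivRealProdCLM, hu, hv, fderiv_clm_apply hd (differentiableAt_const _),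
    fderiv_clm_apply hd (differentiableAt_const _)]
  simp [z, laplacian_eq_iteratedFDeriv_complexPlane, iteratedFDeriv_two_apply]

theorem harmonicOnNhd_comp_equivRealProdCLM {U : Set (ℝ × ℝ)} (hU : IsOpen U) {η : ℝ × ℝ → E}
    (hη : ContDiffOn ℝ 2 η U) (hharm : ∀ p ∈ U, lap η p = 0) :
    HarmonicOnNhd (η ∘ equivRealProdCLM) (equivRealProdCLM ⁻¹' U) := by
  have hV : IsOpen (equivRealProdCLM ⁻¹' U) := hU.preimage equivRealProdCLM.continuous
  have h2 : ContDiffOn ℝ 2 (η ∘ equivRealProdCLM) (equivRealProdCLM ⁻¹' U) :=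
    hη.comp equivRealProdCLM.contDiff.contDiffOn fun _ hw => hw
  refine fun z hz => ⟨h2.contDiffAt (hV.mem_nhds hz), ?_⟩
  filter_upwards [hV.mem_nhds hz] with w hw
  have h := lap_eq_laplacian_comp_equivRealProdCLM (hη.contDiffAt (hU.mem_nhds hw))
  rw [ContinuousLinearEquiv.symm_apply_apply, hharm _ hw] at h
  exact h.symm

end ComplexPlane

theorem InnerProductSpace.HarmonicAt.log_fderiv_sq_add_sq {g : ℂ → ℝ} {z : ℂ} (hg : HarmonicAt g z)
    (h0 : fderiv ℝ g z 1 ^ 2 + fderiv ℝ g z I ^ 2 ≠ 0) :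
    HarmonicAt (fun w => Real.log (fderiv ℝ g w 1 ^ 2 + fderiv ℝ g w I ^ 2)) z := by
  set F : ℂ → ℂ := fun w => fderiv ℝ g w 1 - I * fderiv ℝ g w I
  have hF : ∀ w, ‖F w‖ ^ 2 = fderiv ℝ g w 1 ^ 2 + fderiv ℝ g w I ^ 2 := fun w => by
    simp [F, Complex.sq_norm, Complex.normSq_apply]; ring
  have hF0 : F z ≠ 0 := fun h => h0 (by rw [← hF, h, norm_zero]; norm_num)
  have hlog : (fun w => Real.log (fderiv ℝ g w 1 ^ 2 + fderiv ℝ g w I ^ 2)) =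
      (2 : ℝ) • fun w => Real.log ‖F w‖ := by
    funext w
    rw [← hF, Real.log_pow]
    simp
  rw [hlog]
  exact ((HarmonicAt.analyticAt_complex_partial hg).harmonicAt_log_norm hF0).const_smul

theorem stmt3 (U : Set (ℝ × ℝ)) (hU : IsOpen U) (η : ℝ × ℝ → ℝ)
    (hη : ContDiffOn ℝ 2 η U)
    (hharm : ∀ p ∈ U, lap η p = 0)
    (hne : ∀ p ∈ U, η p ≠ 0)
    (hdne : ∀ p ∈ U, (pdu η p) ^ 2 + (pdv η p) ^ 2 ≠ 0)
    (ν : ℝ × ℝ → ℝ)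
    (hν : ∀ p, ν p = ((pdu η p) ^ 2 + (pdv η p) ^ 2) / (η p) ^ 2) :
    ∀ p ∈ U, lap (fun q => Real.log (ν q)) p - 2 * ν p = 0 := by
  intro p hp
  set logS : ℝ × ℝ → ℝ := fun q => Real.log (pdu η q ^ 2 + pdv η q ^ 2)
  have hlogS : HarmonicAt (logS ∘ equivRealProdCLM) (equivRealProdCLM.symm p) := by
    have hg := harmonicOnNhd_comp_equivRealProdCLM hU hη hharm (equivRealProdCLM.symm p)
      (by rwa [Set.mem_preimage, ContinuousLinearEquiv.apply_symm_apply])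
    simpa only [logS, Function.comp_def, pdu_comp_equivRealProdCLM, pdv_comp_equivRealProdCLM]
      using hg.log_fderiv_sq_add_sq (by
        simpa only [← pdu_comp_equivRealProdCLM, ← pdv_comp_equivRealProdCLM,
          ContinuousLinearEquiv.apply_symm_apply] using hdne p hp)
  have hlogS2 : ContDiffAt ℝ 2 logS p := equivRealProdCLM.contDiffAt_comp_iff.1 hlogS.1
  have hη2 : ContDiffAt ℝ 2 η p := hη.contDiffAt (hU.mem_nhds hp)
  have hlogη := hη2.log (hne p hp)
  have hsplit : (fun q => Real.log (ν q)) =ᶠ[𝓝 p] fun q => logS q - 2 * Real.log (η q) := by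
    filter_upwards [hU.mem_nhds hp] with q hq
    rw [hν, Real.log_div (hdne q hq) (pow_ne_zero 2 (hne q hq)), Real.log_pow]
    norm_num [logS]
  rw [hsplit.lap_eq, lap_sub hlogS2 (contDiffAt_const.mul hlogη), lap_const_mul 2 hlogη,
    lap_log hη2 (hne p hp), hharm p hp, lap_eq_laplacian_comp_equivRealProdCLM hlogS2,
    hlogS.2.eq_of_nhds, Pi.zero_apply, hν]
  have := hne p hp
  field_simp
  ring
end

section
/- Let h₁, h₂ be holomorphic with (h₁')² ≠ (h₂')², and set w₁ = h₁ + h₂, w₂ = h₁ − h₂, g₁ = e^{w₁}, g₂ = e^{w₂}. Then −16·g₁'·conj(g₂')·|g₁'·g₂'| / ((1 + g₁·conj(g₂))²·|1 + g₁·conj(g₂)|²) = −w₁'·conj(w₂')·|w₁'·w₂'| / (cosh²((w₁ + conj(w₂))/2)·|cosh((w₁+conj(w₂))/2)|²), wherever both denominators are nonzero. -/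
/-!
With `s = w₁ + conj w₂` and `E = exp (s / 2)` one has `g₁ · conj g₂ = E²`, hence
`1 + g₁ · conj g₂ = 2 E cosh (s / 2)`, while `gᵢ' = gᵢ wᵢ'` and `|g₁| |g₂| = |E|²`.
The factors `E² |E|²` then cancel between numerator and denominator of the left-hand side.
-/

open Complex

theorem exp_mul_conj_exp (a b : ℂ) :
    exp a * starRingEnd ℂ (exp b) = exp ((a + starRingEnd ℂ b) / 2) ^ 2 := by
  rw [← exp_conj, ← exp_add, ← exp_nat_mul]
  ring_nf

theorem one_add_exp_mul_conj_exp (a b : ℂ) :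
    1 + exp a * starRingEnd ℂ (exp b) =
      2 * exp ((a + starRingEnd ℂ b) / 2) * cosh ((a + starRingEnd ℂ b) / 2) := by
  rw [exp_mul_conj_exp, cosh, exp_neg]
  field_simp
  ring

theorem neg_sixteen_mul_div_scale_eq {E₁ E₂ E : ℂ} (hE : E ≠ 0)
    (h : E₁ * starRingEnd ℂ E₂ = E ^ 2) (p q c : ℂ) :
    -16 * (E₁ * p) * starRingEnd ℂ (E₂ * q) * (‖E₁ * p * (E₂ * q)‖ : ℂ) /
        ((2 * E * c) ^ 2 * (‖2 * E * c‖ : ℂ) ^ 2) =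
      -p * starRingEnd ℂ q * (‖p * q‖ : ℂ) / (c ^ 2 * (‖c‖ : ℂ) ^ 2) := by
  rcases eq_or_ne c 0 with rfl | hc
  · simp
  have hnorm : ‖E₁‖ * ‖E₂‖ = ‖E‖ ^ 2 := by
    rw [← RCLike.norm_conj E₂, ← norm_mul, h, norm_pow]
  have hE' : (‖E‖ : ℂ) ≠ 0 := by simpa using hE
  have hc' : (‖c‖ : ℂ) ≠ 0 := by simpa using hc
  calc -16 * (E₁ * p) * starRingEnd ℂ (E₂ * q) * (‖E₁ * p * (E₂ * q)‖ : ℂ) /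
        ((2 * E * c) ^ 2 * (‖2 * E * c‖ : ℂ) ^ 2)
      = -16 * (E₁ * starRingEnd ℂ E₂) * p * starRingEnd ℂ q *
          ((‖E₁‖ * ‖E₂‖ : ℝ) * ‖p * q‖ : ℂ) /
        ((2 * E * c) ^ 2 * (2 * ‖E‖ * ‖c‖ : ℂ) ^ 2) := by
        simp only [map_mul, norm_mul, Complex.norm_ofNat]
        push_cast
        ring
    _ = -p * starRingEnd ℂ q * (‖p * q‖ : ℂ) / (c ^ 2 * (‖c‖ : ℂ) ^ 2) := by
        rw [h, hnorm]
        push_cast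
        field_simp
        ring

theorem stmt9_general (U : Set ℂ) (hU : IsOpen U) (h₁ h₂ : ℂ → ℂ)
    (hh1 : DifferentiableOn ℂ h₁ U) (hh2 : DifferentiableOn ℂ h₂ U)
    (w₁ w₂ g₁ g₂ : ℂ → ℂ)
    (hw₁ : ∀ z, w₁ z = h₁ z + h₂ z) (hw₂ : ∀ z, w₂ z = h₁ z - h₂ z)
    (hg₁ : ∀ z, g₁ z = Complex.exp (w₁ z)) (hg₂ : ∀ z, g₂ z = Complex.exp (w₂ z)) :
    ∀ z ∈ U, (1 + g₁ z * starRingEnd ℂ (g₂ z)) ≠ 0 →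
      Complex.cosh ((w₁ z + starRingEnd ℂ (w₂ z)) / 2) ≠ 0 →
      -16 * deriv g₁ z * starRingEnd ℂ (deriv g₂ z) *
          (‖deriv g₁ z * deriv g₂ z‖ : ℂ) /
        ((1 + g₁ z * starRingEnd ℂ (g₂ z)) ^ 2 *
          (‖1 + g₁ z * starRingEnd ℂ (g₂ z)‖ : ℂ) ^ 2) =
      -(deriv w₁ z) * starRingEnd ℂ (deriv w₂ z) *
          (‖deriv w₁ z * deriv w₂ z‖ : ℂ) /
        ((Complex.cosh ((w₁ z + starRingEnd ℂ (w₂ z)) / 2)) ^ 2 *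
          (‖Complex.cosh ((w₁ z + starRingEnd ℂ (w₂ z)) / 2)‖ : ℂ) ^ 2) := by
  intro z hz _ _
  have hh1z := (hh1 z hz).differentiableAt (hU.mem_nhds hz)
  have hh2z := (hh2 z hz).differentiableAt (hU.mem_nhds hz)
  have hw₁z : DifferentiableAt ℂ w₁ z := funext hw₁ ▸ hh1z.add hh2z
  have hw₂z : DifferentiableAt ℂ w₂ z := funext hw₂ ▸ hh1z.sub hh2z
  have hdg₁ : deriv g₁ z = exp (w₁ z) * deriv w₁ z := funext hg₁ ▸ deriv_cexp hw₁z
  have hdg₂ : deriv g₂ z = exp (w₂ z) * deriv w₂ z := funext hg₂ ▸ deriv_cexp hw₂z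
  rw [hdg₁, hdg₂, hg₁, hg₂, one_add_exp_mul_conj_exp]
  exact neg_sixteen_mul_div_scale_eq (exp_ne_zero _) (exp_mul_conj_exp _ _) _ _ _

theorem stmt9 (U : Set ℂ) (hU : IsOpen U) (h₁ h₂ : ℂ → ℂ)
    (hh1 : DifferentiableOn ℂ h₁ U) (hh2 : DifferentiableOn ℂ h₂ U)
    (hne : ∀ z ∈ U, (deriv h₁ z) ^ 2 ≠ (deriv h₂ z) ^ 2)
    (w₁ w₂ g₁ g₂ : ℂ → ℂ)
    (hw₁ : ∀ z, w₁ z = h₁ z + h₂ z) (hw₂ : ∀ z, w₂ z = h₁ z - h₂ z)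
    (hg₁ : ∀ z, g₁ z = Complex.exp (w₁ z)) (hg₂ : ∀ z, g₂ z = Complex.exp (w₂ z)) :
    ∀ z ∈ U, (1 + g₁ z * starRingEnd ℂ (g₂ z)) ≠ 0 →
      Complex.cosh ((w₁ z + starRingEnd ℂ (w₂ z)) / 2) ≠ 0 →
      -16 * deriv g₁ z * starRingEnd ℂ (deriv g₂ z) *
          (‖deriv g₁ z * deriv g₂ z‖ : ℂ) /
        ((1 + g₁ z * starRingEnd ℂ (g₂ z)) ^ 2 *
          (‖1 + g₁ z * starRingEnd ℂ (g₂ z)‖ : ℂ) ^ 2) =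
      -(deriv w₁ z) * starRingEnd ℂ (deriv w₂ z) *
          (‖deriv w₁ z * deriv w₂ z‖ : ℂ) /
        ((Complex.cosh ((w₁ z + starRingEnd ℂ (w₂ z)) / 2)) ^ 2 *
          (‖Complex.cosh ((w₁ z + starRingEnd ℂ (w₂ z)) / 2)‖ : ℂ) ^ 2) :=
  stmt9_general U hU h₁ h₂ hh1 hh2 w₁ w₂ g₁ g₂ hw₁ hw₂ hg₁ hg₂
end

section
/- Let θ : U → ℂ be a complex harmonic function on an open set U ⊆ ℝ² with cosh θ ≠ 0 and (θ_u)² + (θ_v)² ≠ 0. Then α = −((θ_u)² + (θ_v)²)/cosh²θ satisfies Δ(log α) = 2α for any smooth local branch of log α. -/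
open Complex

/-!
Put `φ = θ_u - i θ_v` and `ψ = θ_u + i θ_v`. The equation `Δθ = 0` is the Cauchy–Riemann system
for `φ` as a function of `u + i v`, and for `ψ` as a function of `u - i v`, so both are
holomorphic in the appropriate complex structure: they are smooth and `log φ`, `log ψ` are
harmonic. Since `θ_u² + θ_v² = φ ψ`, we have `α cosh² θ = -φ ψ`. The quantity
`lapLog f = Δf / f - (f_u² + f_v²) / f²` equals `Δ (log f)` for every branch of the logarithm and
is additive on products, hence
`Δ L = lapLog α = -2 lapLog (cosh θ) = -2 (θ_u² + θ_v²) / cosh² θ = 2 α`,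
using `Δθ = 0` and `cosh² - sinh² = 1`.
-/

open Filter Topology

/-- `pdu f = pd (1, 0) f` and `pdv f = pd (0, 1) f` hold by `rfl`. -/
noncomputable def pd {E : Type*} [NormedAddCommGroup E] [NormedSpace ℝ E]
    (w : E) (f : E → ℂ) (x : E) : ℂ :=
  fderiv ℝ f x w

section DirectionalDerivative

variable {E : Type*} [NormedAddCommGroup E] [NormedSpace ℝ E] {f g : E → ℂ} {x v w : E}

lemma pd_congr (h : f =ᶠ[𝓝 x] g) : pd w f x = pd w g x := by
  rw [pd, pd, h.fderiv_eq]

lemma pd_neg : pd w (-f) x = -pd w f x := by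
  simp [pd, fderiv_neg]

lemma pd_add (hf : DifferentiableAt ℝ f x) (hg : DifferentiableAt ℝ g x) :
    pd w (f + g) x = pd w f x + pd w g x := by
  simp [pd, fderiv_add hf hg]

lemma pd_mul (hf : DifferentiableAt ℝ f x) (hg : DifferentiableAt ℝ g x) :
    pd w (f * g) x = f x * pd w g x + g x * pd w f x := by
  simp [pd, fderiv_mul hf hg]

lemma pd_comp {F : ℂ → ℂ} (hF : DifferentiableAt ℂ F (f x)) (hf : DifferentiableAt ℝ f x) :
    pd w (F ∘ f) x = deriv F (f x) * pd w f x := by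
  simp [pd, (hF.hasDerivAt.comp_hasFDerivAt x hf.hasFDerivAt).fderiv]

lemma ContDiffAt.eventually_differentiableAt_s12 (h : ContDiffAt ℝ 2 f x) :
    ∀ᶠ y in 𝓝 x, DifferentiableAt ℝ f y :=
  (h.eventually (by simp)).mono fun _ hy => hy.differentiableAt two_ne_zero

lemma ContDiffAt.differentiableAt_pd (h : ContDiffAt ℝ 2 f x) :
    DifferentiableAt ℝ (pd w f) x :=
  ((h.fderiv_right (m := 1) le_rfl).differentiableAt one_ne_zero).clm_apply
    (differentiableAt_const w)

lemma pd_pd_comm (h : ContDiffAt ℝ 2 f x) : pd v (pd w f) x = pd w (pd v f) x := by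
  have hd := (h.fderiv_right (m := 1) le_rfl).differentiableAt one_ne_zero
  have key : ∀ v w, pd v (pd w f) x = fderiv ℝ (fderiv ℝ f) x v w := fun v w => by
    change fderiv ℝ (fun y => fderiv ℝ f y w) x v = _
    simp [fderiv_clm_apply hd (differentiableAt_const w)]
  rw [key, key, h.isSymmSndFDerivAt (by simp)]

lemma pd_pd_mul (hf : ContDiffAt ℝ 2 f x) (hg : ContDiffAt ℝ 2 g x) :
    pd w (pd w (f * g)) x =
      f x * pd w (pd w g) x + 2 * (pd w f x * pd w g x) + g x * pd w (pd w f) x := by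
  have hf1 := hf.differentiableAt two_ne_zero
  have hg1 := hg.differentiableAt two_ne_zero
  have h : pd w (f * g) =ᶠ[𝓝 x] f * pd w g + g * pd w f := by
    filter_upwards [hf.eventually_differentiableAt_s12, hg.eventually_differentiableAt_s12]
      with y hfy hgy using pd_mul hfy hgy
  rw [pd_congr h, pd_add (hf1.mul hg.differentiableAt_pd) (hg1.mul hf.differentiableAt_pd),
    pd_mul hf1 hg.differentiableAt_pd, pd_mul hg1 hf.differentiableAt_pd]
  ring

lemma pd_pd_comp {F : ℂ → ℂ} (hF : AnalyticAt ℂ F (f x)) (hf : ContDiffAt ℝ 2 f x) :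
    pd w (pd w (F ∘ f)) x =
      deriv (deriv F) (f x) * pd w f x ^ 2 + deriv F (f x) * pd w (pd w f) x := by
  have hf1 := hf.differentiableAt two_ne_zero
  have h : pd w (F ∘ f) =ᶠ[𝓝 x] (deriv F ∘ f) * pd w f := by
    filter_upwards [hf.continuousAt.eventually hF.eventually_analyticAt,
      hf.eventually_differentiableAt_s12] with y hFy hfy
    exact pd_comp hFy.differentiableAt hfy
  have hF' := hF.deriv.differentiableAt
  rw [pd_congr h, pd_mul (hF'.hasDerivAt.comp_hasFDerivAt x hf1.hasFDerivAt).differentiableAt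
    hf.differentiableAt_pd, pd_comp hF' hf1]
  simp only [Function.comp_apply]
  ring

lemma differentiableAt_comp_of_cauchyRiemann (e : ℂ →L[ℝ] E) {z : ℂ}
    (hf : DifferentiableAt ℝ f (e z)) (hCR : pd (e I) f (e z) = I * pd (e 1) f (e z)) :
    DifferentiableAt ℂ (f ∘ e) z := by
  refine differentiableAt_complex_iff_differentiableAt_real.2 ⟨hf.comp z e.differentiableAt, ?_⟩
  rw [fderiv_comp z hf e.differentiableAt, e.fderiv]
  simpa [pd] using hCR

end DirectionalDerivative

/-- `f_u² + f_v²`, a complex square without conjugation, not `‖∇f‖²`. -/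
noncomputable def gradSq (f : ℝ × ℝ → ℂ) (x : ℝ × ℝ) : ℂ :=
  pd (1, 0) f x ^ 2 + pd (0, 1) f x ^ 2

noncomputable def lapLog (f : ℝ × ℝ → ℂ) (x : ℝ × ℝ) : ℂ :=
  lap f x / f x - gradSq f x / f x ^ 2

section Laplacian

variable {f g : ℝ × ℝ → ℂ} {x : ℝ × ℝ}

lemma lap_eq_pd : lap f x = pd (1, 0) (pd (1, 0) f) x + pd (0, 1) (pd (0, 1) f) x := rfl

lemma lapLog_congr (h : f =ᶠ[𝓝 x] g) : lapLog f x = lapLog g x := by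
  have h' : ∀ w, pd w f =ᶠ[𝓝 x] pd w g := fun w =>
    h.eventuallyEq_nhds.mono fun _ hy => pd_congr hy
  simp only [lapLog, lap_eq_pd, gradSq, h.eq_of_nhds, pd_congr h, pd_congr (h' _)]

lemma lapLog_neg : lapLog (-f) x = lapLog f x := by
  have h : ∀ w, pd w (-f) = -pd w f := fun w => funext fun _ => pd_neg
  simp only [lapLog, lap_eq_pd, gradSq, h, pd_neg, Pi.neg_apply]
  ring

lemma lapLog_mul (hf : ContDiffAt ℝ 2 f x) (hg : ContDiffAt ℝ 2 g x) (hf0 : f x ≠ 0)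
    (hg0 : g x ≠ 0) : lapLog (f * g) x = lapLog f x + lapLog g x := by
  simp only [lapLog, lap_eq_pd, gradSq, pd_pd_mul hf hg,
    pd_mul (hf.differentiableAt two_ne_zero) (hg.differentiableAt two_ne_zero), Pi.mul_apply]
  field_simp
  ring

lemma lapLog_comp {F : ℂ → ℂ} (hF : AnalyticAt ℂ F (f x)) (hf : ContDiffAt ℝ 2 f x) :
    lapLog (F ∘ f) x = (deriv (deriv F) (f x) / F (f x) - (deriv F (f x) / F (f x)) ^ 2)
      * gradSq f x + deriv F (f x) / F (f x) * lap f x := by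
  simp only [lapLog, lap_eq_pd, gradSq, pd_pd_comp hF hf,
    pd_comp hF.differentiableAt (hf.differentiableAt two_ne_zero), Function.comp_apply]
  ring

lemma lapLog_exp_comp (hf : ContDiffAt ℝ 2 f x) : lapLog (exp ∘ f) x = lap f x := by
  rw [lapLog_comp analyticAt_cexp hf]
  simp [Complex.deriv_exp, exp_ne_zero]

lemma lapLog_cosh_comp (hf : ContDiffAt ℝ 2 f x) (hc : cosh (f x) ≠ 0) :
    lapLog (cosh ∘ f) x = gradSq f x / cosh (f x) ^ 2 + sinh (f x) / cosh (f x) * lap f x := by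
  rw [lapLog_comp analyticAt_cosh hf, Complex.deriv_cosh, Complex.deriv_sinh]
  congr 1
  field_simp
  linear_combination gradSq f x * cosh_sq_sub_sinh_sq (f x)

lemma lapLog_comp_clm_of_isotropic {G : ℂ → ℂ} (ℓ : ℝ × ℝ →L[ℝ] ℂ)
    (hℓ : ℓ (1, 0) ^ 2 + ℓ (0, 1) ^ 2 = 0) (hG : AnalyticAt ℂ G (ℓ x)) :
    lapLog (G ∘ ℓ) x = 0 := by
  have hpd : ∀ w, pd w ℓ = fun _ => ℓ w := fun w => funext fun y => by simp [pd]
  have hℓ2 : ContDiffAt ℝ 2 ℓ x := ℓ.contDiff.contDiffAt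
  rw [lapLog_comp hG hℓ2]
  simp [gradSq, lap_eq_pd, hpd, hℓ, pd]

end Laplacian

lemma contDiffAt_and_lapLog_eq_zero_of_cauchyRiemann {f : ℝ × ℝ → ℂ} {V : Set (ℝ × ℝ)}
    {x : ℝ × ℝ} (e : ℂ ≃L[ℝ] ℝ × ℝ) (he : e.symm (1, 0) ^ 2 + e.symm (0, 1) ^ 2 = 0)
    (hV : IsOpen V) (hf : ∀ y ∈ V, DifferentiableAt ℝ f y)
    (hCR : ∀ y ∈ V, pd (e I) f y = I * pd (e 1) f y) (hx : x ∈ V) :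
    ContDiffAt ℝ 2 f x ∧ lapLog f x = 0 := by
  have hG : DifferentiableOn ℂ (f ∘ e) (e ⁻¹' V) := fun z hz =>
    (differentiableAt_comp_of_cauchyRiemann (e : ℂ →L[ℝ] ℝ × ℝ) (hf _ hz)
      (hCR _ hz)).differentiableWithinAt
  have hGa : AnalyticAt ℂ (f ∘ e) (e.symm x) :=
    hG.analyticAt ((hV.preimage e.continuous).mem_nhds (by simpa using hx))
  have hGc : ContDiffAt ℂ 2 (f ∘ e) (e.symm x) := hGa.contDiffAt
  have hfG : f = (f ∘ e) ∘ e.symm := by ext y; simp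
  rw [hfG]
  exact ⟨(hGc.restrict_scalars ℝ).comp x e.symm.contDiff.contDiffAt,
    lapLog_comp_clm_of_isotropic (e.symm : ℝ × ℝ →L[ℝ] ℂ) he hGa⟩

lemma pd_pdu_add_mul_pdv_of_lap_eq_zero {θ : ℝ × ℝ → ℂ} {c : ℂ} {y : ℝ × ℝ}
    (hθ : ContDiffAt ℝ 2 θ y) (hΔ : lap θ y = 0) (hc : c ^ 2 = -1) :
    pd (0, 1) (fun y => pdu θ y + c * pdv θ y) y =
      -c * pd (1, 0) (fun y => pdu θ y + c * pdv θ y) y := by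
  have hpd : ∀ w, pd w (fun y => pdu θ y + c * pdv θ y) y =
      pd w (pd (1, 0) θ) y + c * pd w (pd (0, 1) θ) y := fun w => by
    have hu := hθ.differentiableAt_pd (w := (1, 0))
    have hv := hθ.differentiableAt_pd (w := (0, 1))
    change fderiv ℝ (fun y => pd (1, 0) θ y + c * pd (0, 1) θ y) y w = _
    rw [fderiv_fun_add hu (hv.const_mul c), fderiv_const_mul hv]
    rfl
  have hsymm := pd_pd_comm hθ (v := (1, 0)) (w := (0, 1))
  rw [lap_eq_pd] at hΔ
  rw [hpd, hpd]
  linear_combination c * hΔ + c ^ 2 * hsymm + pd (0, 1) (pd (1, 0) θ) y * hc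

lemma contDiffAt_and_lapLog_eq_zero_of_harmonic {U : Set (ℝ × ℝ)} {θ : ℝ × ℝ → ℂ} {c : ℂ}
    {x : ℝ × ℝ} (hU : IsOpen U) (hθ : ContDiffOn ℝ 2 θ U) (hΔ : ∀ p ∈ U, lap θ p = 0)
    (hc : c = I ∨ c = -I) (hx : x ∈ U) :
    ContDiffAt ℝ 2 (fun y => pdu θ y + c * pdv θ y) x ∧
      lapLog (fun y => pdu θ y + c * pdv θ y) x = 0 := by
  have hθ' : ∀ y ∈ U, ContDiffAt ℝ 2 θ y := fun y hy => hθ.contDiffAt (hU.mem_nhds hy)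
  have hdiff : ∀ y ∈ U, DifferentiableAt ℝ (fun y => pdu θ y + c * pdv θ y) y := fun y hy =>
    (hθ' y hy).differentiableAt_pd.add ((hθ' y hy).differentiableAt_pd.const_mul c)
  have hCR : ∀ y ∈ U, pd (0, 1) (fun y => pdu θ y + c * pdv θ y) y =
      -c * pd (1, 0) (fun y => pdu θ y + c * pdv θ y) y := fun y hy =>
    pd_pdu_add_mul_pdv_of_lap_eq_zero (hθ' y hy) (hΔ y hy) (by rcases hc with rfl | rfl <;> simp)
  rcases hc with rfl | rfl
  · -- `e z = (re z, -im z)`: this function is holomorphic in `u - i v`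
    set e := conjCLE.trans equivRealProdCLM
    have he1 : e 1 = (1, 0) := by simp [e]
    have heI : e I = -(0, 1) := by simp [e]
    have he : e.symm (1, 0) ^ 2 + e.symm (0, 1) ^ 2 = 0 := by
      rw [e.symm_apply_eq.2 he1.symm,
        e.symm_apply_eq.2 (by simp [e] : ((0 : ℝ), (1 : ℝ)) = e (-I))]
      simp
    refine contDiffAt_and_lapLog_eq_zero_of_cauchyRiemann e he hU hdiff (fun y hy => ?_) hx
    rw [heI, he1, pd, map_neg, ← pd, hCR y hy]
    ring
  · refine contDiffAt_and_lapLog_eq_zero_of_cauchyRiemann equivRealProdCLM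
      (by simp [equivRealProdCLM_symm_apply]) hU hdiff (fun y hy => ?_) hx
    rw [show equivRealProdCLM I = (0, 1) by simp, show equivRealProdCLM 1 = (1, 0) by simp,
      hCR y hy]
    ring

theorem stmt12 (U : Set (ℝ × ℝ)) (hU : IsOpen U) (θ : ℝ × ℝ → ℂ)
    (hθ : ContDiffOn ℝ 2 θ U)
    (hharm : ∀ p ∈ U, lap θ p = 0)
    (hc : ∀ p ∈ U, Complex.cosh (θ p) ≠ 0)
    (hd : ∀ p ∈ U, (pdu θ p) ^ 2 + (pdv θ p) ^ 2 ≠ 0)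
    (α : ℝ × ℝ → ℂ)
    (hα : ∀ p, α p = -((pdu θ p) ^ 2 + (pdv θ p) ^ 2) / (Complex.cosh (θ p)) ^ 2)
    (L : ℝ × ℝ → ℂ) (hL : ContDiffOn ℝ 2 L U)
    (hlog : ∀ p ∈ U, Complex.exp (L p) = α p) :
    ∀ p ∈ U, lap L p = 2 * α p := by
  intro p hp
  have hUp : U ∈ 𝓝 p := hU.mem_nhds hp
  have hθp : ContDiffAt ℝ 2 θ p := hθ.contDiffAt hUp
  have hαL : α =ᶠ[𝓝 p] exp ∘ L := by
    filter_upwards [hUp] with y hy using (hlog y hy).symm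
  have hLp : ContDiffAt ℝ 2 L p := hL.contDiffAt hUp
  have hα2 : ContDiffAt ℝ 2 α p := hLp.cexp.congr_of_eventuallyEq hαL
  have hα0 : α p ≠ 0 := hlog p hp ▸ exp_ne_zero _
  have hcosh2 : ContDiffAt ℝ 2 (cosh ∘ θ) p :=
    (contDiff_cosh.restrict_scalars ℝ).contDiffAt.comp p hθp
  obtain ⟨hφ2, hφ⟩ := contDiffAt_and_lapLog_eq_zero_of_harmonic hU hθ hharm (Or.inr rfl) hp
  obtain ⟨hψ2, hψ⟩ := contDiffAt_and_lapLog_eq_zero_of_harmonic hU hθ hharm (Or.inl rfl) hp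
  set φ : ℝ × ℝ → ℂ := fun y => pdu θ y + -I * pdv θ y
  set ψ : ℝ × ℝ → ℂ := fun y => pdu θ y + I * pdv θ y
  have hφψ : ∀ y, φ y * ψ y = pdu θ y ^ 2 + pdv θ y ^ 2 := fun y => by
    linear_combination (-pdv θ y ^ 2) * I_sq
  obtain ⟨hφ0, hψ0⟩ := mul_ne_zero_iff.1 ((hφψ p).symm ▸ hd p hp)
  have hfactor : α * (cosh ∘ θ) * (cosh ∘ θ) =ᶠ[𝓝 p] -(φ * ψ) := by
    filter_upwards [hUp] with y hy
    simp only [Pi.mul_apply, Pi.neg_apply, Function.comp_apply, hα y, hφψ y]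
    field_simp [hc y hy]
  have hsum : lapLog α p + 2 * lapLog (cosh ∘ θ) p = 0 := by
    rw [two_mul, ← add_assoc, ← lapLog_mul hα2 hcosh2 hα0 (hc p hp), ← lapLog_mul
      (f := α * (cosh ∘ θ)) (hα2.mul hcosh2) hcosh2 (mul_ne_zero hα0 (hc p hp)) (hc p hp),
      lapLog_congr hfactor, lapLog_neg, lapLog_mul hφ2 hψ2 hφ0 hψ0, hφ, hψ, add_zero]
  rw [← lapLog_exp_comp hLp, ← lapLog_congr hαL, eq_neg_of_add_eq_zero_left hsum,
    lapLog_cosh_comp hθp (hc p hp), hharm p hp, hα p]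
  simp only [gradSq, pd, pdu, pdv]
  ring
end

section
/- Let g₁, g₂ be holomorphic on a domain with g₁'g₂' ≠ 0 and 1 + g₁·conj(g₂) ≠ 0, and set α = −4·g₁'·conj(g₂')/(1 + g₁·conj(g₂))². Then for any smooth local branch L of log α one has ΔL = 2α, where Δ is the Laplacian in the underlying real coordinates (u,v), z = u + iv. -/
/-!
In Wirtinger derivatives `Δ = 2 (∂_z̄ ∂_z + ∂_z ∂_z̄)`. From `exp L = α` we get `dL = dα / α`, so with
`D = 1 + g₁ conj g₂`
  `∂_z L = g₁'' / g₁' - 2 g₁' conj g₂ / D`,   `∂_z̄ L = conj g₂'' / conj g₂' - 2 g₁ conj g₂' / D`,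
because `∂_z̄` kills `g₁` and its derivatives and `∂_z` kills `conj g₂` and its derivatives.
Both mixed second derivatives are then `-2 g₁' conj g₂' / D² = α / 2`, hence `Δ L = 2 α`.
-/

open Complex

open Filter Topology ComplexConjugate

noncomputable def dz : ℝ × ℝ →L[ℝ] ℂ := equivRealProdCLM.symm.toContinuousLinearMap

noncomputable def dzbar : ℝ × ℝ →L[ℝ] ℂ := conjCLE.toContinuousLinearMap.comp dz

@[simp] lemma dz_apply (q : ℝ × ℝ) : dz q = q.1 + q.2 * I :=
  equivRealProdCLM_symm_apply q

@[simp] lemma dzbar_apply (q : ℝ × ℝ) : dzbar q = q.1 - q.2 * I := by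
  simp [dzbar, sub_eq_add_neg]

def HasWirtingerDerivAt (f : ℝ × ℝ → ℂ) (A B : ℂ) (p : ℝ × ℝ) : Prop :=
  HasFDerivAt f (A • dz + B • dzbar) p

lemma hasWirtingerDerivAt_dz (p : ℝ × ℝ) : HasWirtingerDerivAt dz 1 0 p :=
  dz.hasFDerivAt.congr_fderiv (by module)

namespace HasWirtingerDerivAt

variable {f g : ℝ × ℝ → ℂ} {A B A' B' : ℂ} {p : ℝ × ℝ}

lemma pdu_eq (h : HasWirtingerDerivAt f A B p) : pdu f p = A + B := by
  simp [pdu, h.fderiv]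

lemma pdv_eq (h : HasWirtingerDerivAt f A B p) : pdv f p = I * (A - B) := by
  simp [pdv, h.fderiv]; ring

lemma const_add (h : HasWirtingerDerivAt f A B p) (c : ℂ) :
    HasWirtingerDerivAt (fun q => c + f q) A B p :=
  HasFDerivAt.const_add c h

lemma add (hf : HasWirtingerDerivAt f A B p) (hg : HasWirtingerDerivAt g A' B' p) :
    HasWirtingerDerivAt (fun q => f q + g q) (A + A') (B + B') p :=
  (HasFDerivAt.add hf hg).congr_fderiv (by module)

lemma sub (hf : HasWirtingerDerivAt f A B p) (hg : HasWirtingerDerivAt g A' B' p) :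
    HasWirtingerDerivAt (fun q => f q - g q) (A - A') (B - B') p :=
  (HasFDerivAt.sub hf hg).congr_fderiv (by module)

lemma mul (hf : HasWirtingerDerivAt f A B p) (hg : HasWirtingerDerivAt g A' B' p) :
    HasWirtingerDerivAt (fun q => f q * g q) (f p * A' + g p * A) (f p * B' + g p * B) p :=
  (HasFDerivAt.mul hf hg).congr_fderiv (by ext <;> simp <;> ring)

lemma const_mul (h : HasWirtingerDerivAt f A B p) (c : ℂ) :
    HasWirtingerDerivAt (fun q => c * f q) (c * A) (c * B) p :=
  (HasFDerivAt.const_mul h c).congr_fderiv (by module)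

lemma comp_hasDerivAt {g : ℂ → ℂ} {c : ℂ} (hg : HasDerivAt g c (f p))
    (hf : HasWirtingerDerivAt f A B p) :
    HasWirtingerDerivAt (fun q => g (f q)) (c * A) (c * B) p :=
  (hg.comp_hasFDerivAt p hf).congr_fderiv (by module)

lemma star (h : HasWirtingerDerivAt f A B p) :
    HasWirtingerDerivAt (fun q => conj (f q)) (conj B) (conj A) p :=
  (conjCLE.hasFDerivAt.comp p h).congr_fderiv (by ext <;> simp <;> ring)

lemma inv (h : HasWirtingerDerivAt f A B p) (hf : f p ≠ 0) :
    HasWirtingerDerivAt (fun q => (f q)⁻¹) (-A / f p ^ 2) (-B / f p ^ 2) p := by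
  convert h.comp_hasDerivAt (hasDerivAt_inv hf) using 1 <;> ring

lemma div (hf : HasWirtingerDerivAt f A B p) (hg : HasWirtingerDerivAt g A' B' p) (hgp : g p ≠ 0) :
    HasWirtingerDerivAt (fun q => f q / g q)
      ((g p * A - f p * A') / g p ^ 2) ((g p * B - f p * B') / g p ^ 2) p := by
  convert hf.mul (hg.inv hgp) using 1 <;> field_simp <;> ring

end HasWirtingerDerivAt

theorem lap_eq_of_hasWirtingerDerivAt {f A B : ℝ × ℝ → ℂ} {p : ℝ × ℝ} {A₁ A₂ B₁ B₂ : ℂ}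
    (hf : ∀ᶠ q in 𝓝 p, HasWirtingerDerivAt f (A q) (B q) q)
    (hA : HasWirtingerDerivAt A A₁ A₂ p) (hB : HasWirtingerDerivAt B B₁ B₂ p) :
    lap f p = 2 * (A₂ + B₁) := by
  have hu : pdu f =ᶠ[𝓝 p] fun q => A q + B q := hf.mono fun q hq => hq.pdu_eq
  have hv : pdv f =ᶠ[𝓝 p] fun q => I * (A q - B q) := hf.mono fun q hq => hq.pdv_eq
  rw [lap, pdu, pdv, hu.fderiv_eq, hv.fderiv_eq, ← pdu, ← pdv, (hA.add hB).pdu_eq,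
    ((hA.sub hB).const_mul I).pdv_eq]
  linear_combination (A₁ - A₂ - B₁ + B₂) * I_sq

theorem HasWirtingerDerivAt.of_exp_eventuallyEq {L f : ℝ × ℝ → ℂ} {A B : ℂ} {p : ℝ × ℝ}
    (hL : DifferentiableAt ℝ L p) (hexp : ∀ᶠ q in 𝓝 p, exp (L q) = f q)
    (hf : HasWirtingerDerivAt f A B p) :
    HasWirtingerDerivAt L (A / f p) (B / f p) p := by
  have hexpL : HasFDerivAt f (exp (L p) • fderiv ℝ L p) p :=
    ((hasDerivAt_exp _).comp_hasFDerivAt p hL.hasFDerivAt).congr_of_eventuallyEq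
      (hexp.mono fun q hq => hq.symm)
  have hfp : f p = exp (L p) := hexp.self_of_nhds.symm
  have hdL : fderiv ℝ L p = (f p)⁻¹ • (A • dz + B • dzbar) := by
    rw [← hexpL.unique hf, hfp, smul_smul, inv_mul_cancel₀ (exp_ne_zero _), one_smul]
  exact hL.hasFDerivAt.congr_fderiv (by rw [hdL]; module)

section HolomorphicTower

-- `a n` and `b n` play the roles of `g₁⁽ⁿ⁾ ∘ dz` and `conj ∘ g₂⁽ⁿ⁾ ∘ dz`.
variable {a b : ℕ → ℝ × ℝ → ℂ}

lemma hasWirtingerDerivAt_liouville {p : ℝ × ℝ}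
    (ha : ∀ n, HasWirtingerDerivAt (a n) (a (n + 1) p) 0 p)
    (hb : ∀ n, HasWirtingerDerivAt (b n) 0 (b (n + 1) p) p)
    (ha₁ : a 1 p ≠ 0) (hb₁ : b 1 p ≠ 0) (hD : 1 + a 0 p * b 0 p ≠ 0) :
    HasWirtingerDerivAt (fun q => -4 * a 1 q * b 1 q / (1 + a 0 q * b 0 q) ^ 2)
      (-4 * a 1 p * b 1 p / (1 + a 0 p * b 0 p) ^ 2 *
        (a 2 p / a 1 p - 2 * (a 1 p * b 0 p / (1 + a 0 p * b 0 p))))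
      (-4 * a 1 p * b 1 p / (1 + a 0 p * b 0 p) ^ 2 *
        (b 2 p / b 1 p - 2 * (a 0 p * b 1 p / (1 + a 0 p * b 0 p)))) p := by
  have hD' := ((ha 0).mul (hb 0)).const_add 1
  convert (((ha 1).const_mul (-4)).mul (hb 1)).div (hD'.mul hD') (mul_ne_zero hD hD) using 1
  · ext q; ring
  · field_simp; ring
  · field_simp; ring

theorem lap_eq_of_exp_eq_liouville {V : Set (ℝ × ℝ)} (hV : IsOpen V)
    (ha : ∀ q ∈ V, ∀ n, HasWirtingerDerivAt (a n) (a (n + 1) q) 0 q)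
    (hb : ∀ q ∈ V, ∀ n, HasWirtingerDerivAt (b n) 0 (b (n + 1) q) q)
    (ha₁ : ∀ q ∈ V, a 1 q ≠ 0) (hb₁ : ∀ q ∈ V, b 1 q ≠ 0)
    (hD : ∀ q ∈ V, 1 + a 0 q * b 0 q ≠ 0) {L : ℝ × ℝ → ℂ} (hL : DifferentiableOn ℝ L V)
    (hexp : ∀ q ∈ V, exp (L q) = -4 * a 1 q * b 1 q / (1 + a 0 q * b 0 q) ^ 2)
    {p : ℝ × ℝ} (hp : p ∈ V) :
    lap L p = 2 * (-4 * a 1 p * b 1 p / (1 + a 0 p * b 0 p) ^ 2) := by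
  have hLw : ∀ q ∈ V, HasWirtingerDerivAt L
      (a 2 q / a 1 q - 2 * (a 1 q * b 0 q / (1 + a 0 q * b 0 q)))
      (b 2 q / b 1 q - 2 * (a 0 q * b 1 q / (1 + a 0 q * b 0 q))) q := fun q hq => by
    have hα := (hasWirtingerDerivAt_liouville (ha q hq) (hb q hq) (ha₁ q hq) (hb₁ q hq)
      (hD q hq)).of_exp_eventuallyEq (hL.differentiableAt (hV.mem_nhds hq))
      (eventually_of_mem (hV.mem_nhds hq) hexp)
    have hα0 : -4 * a 1 q * b 1 q / (1 + a 0 q * b 0 q) ^ 2 ≠ 0 := by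
      rw [← hexp q hq]; exact exp_ne_zero _
    simpa only [mul_div_cancel_left₀ _ hα0] using hα
  have hD' := ((ha p hp 0).mul (hb p hp 0)).const_add 1
  have hA := ((ha p hp 2).div (ha p hp 1) (ha₁ p hp)).sub
    ((((ha p hp 1).mul (hb p hp 0)).div hD' (hD p hp)).const_mul 2)
  have hB := ((hb p hp 2).div (hb p hp 1) (hb₁ p hp)).sub
    ((((ha p hp 0).mul (hb p hp 1)).div hD' (hD p hp)).const_mul 2)
  rw [lap_eq_of_hasWirtingerDerivAt (eventually_of_mem (hV.mem_nhds hp) hLw) hA hB]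
  field_simp
  ring

end HolomorphicTower

lemma AnalyticOnNhd.hasWirtingerDerivAt_iterate_deriv_comp_dz {U : Set ℂ} {g : ℂ → ℂ}
    (hg : AnalyticOnNhd ℂ g U) {p : ℝ × ℝ} (hp : dz p ∈ U) (n : ℕ) :
    HasWirtingerDerivAt (fun q => deriv^[n] g (dz q)) (deriv^[n + 1] g (dz p)) 0 p := by
  rw [Function.iterate_succ_apply']
  simpa using (hasWirtingerDerivAt_dz p).comp_hasDerivAt
    ((hg.iterated_deriv n) _ hp).differentiableAt.hasDerivAt

theorem stmt19 (U : Set ℂ) (hU : IsOpen U) (g₁ g₂ : ℂ → ℂ)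
    (hg1 : DifferentiableOn ℂ g₁ U) (hg2 : DifferentiableOn ℂ g₂ U)
    (hd : ∀ z ∈ U, deriv g₁ z * deriv g₂ z ≠ 0)
    (hg : ∀ z ∈ U, 1 + g₁ z * starRingEnd ℂ (g₂ z) ≠ 0)
    (α : ℝ × ℝ → ℂ)
    (hα : ∀ p : ℝ × ℝ,
      α p = -4 * deriv g₁ (p.1 + p.2 * Complex.I) *
          starRingEnd ℂ (deriv g₂ (p.1 + p.2 * Complex.I)) /
        (1 + g₁ (p.1 + p.2 * Complex.I) *
          starRingEnd ℂ (g₂ (p.1 + p.2 * Complex.I))) ^ 2)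
    (V : Set (ℝ × ℝ)) (hV : V = {p : ℝ × ℝ | (p.1 + p.2 * Complex.I : ℂ) ∈ U})
    (L : ℝ × ℝ → ℂ) (hL : ContDiffOn ℝ 2 L V)
    (hlog : ∀ p ∈ V, Complex.exp (L p) = α p) :
    ∀ p ∈ V, lap L p = 2 * α p := by
  obtain rfl : V = dz ⁻¹' U := by simp only [hV, Set.preimage, dz_apply]
  have hα' (q : ℝ × ℝ) : α q = -4 * deriv^[1] g₁ (dz q) * conj (deriv^[1] g₂ (dz q)) /
      (1 + deriv^[0] g₁ (dz q) * conj (deriv^[0] g₂ (dz q))) ^ 2 := by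
    rw [hα, dz_apply]; rfl
  intro p hp
  rw [hα' p]
  exact lap_eq_of_exp_eq_liouville (a := fun n q => deriv^[n] g₁ (dz q))
    (b := fun n q => conj (deriv^[n] g₂ (dz q))) (hU.preimage dz.continuous)
    (fun q hq => (hg1.analyticOnNhd hU).hasWirtingerDerivAt_iterate_deriv_comp_dz hq)
    (fun q hq n => by simpa only [map_zero] using
      ((hg2.analyticOnNhd hU).hasWirtingerDerivAt_iterate_deriv_comp_dz hq n).star)
    (fun q hq => left_ne_zero_of_mul (hd _ hq))
    (fun q hq => (map_ne_zero _).2 (right_ne_zero_of_mul (hd _ hq)))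
    (fun q hq => hg _ hq) (hL.differentiableOn (by norm_num))
    (fun q hq => (hlog q hq).trans (hα' q)) hp
end
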